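/- arXiv:2309.08781 — 5 statements merged into one kernel-verified Lean document; each statement's English description precedes it below -/
import Mathlib

section
/- In a homogeneous-goods market, let S^G be the set of sellers transacting in an optimal matching under graph G and S̄^G = S \ S^G. Then at transaction fee α = 1, every subset P ⊆ S̄^G joining the platform constitutes a pure Platform Equilibrium. -/
open Finset

/-- A matching between buyers `B` and sellers `S` along edges of the bipartite graph `g`:
a set of (buyer, seller) pairs using only allowed edges, with each buyer and each seller
appearing at most once. -/
def IsMatching (B S : Finset ℕ) (g : ℕ → ℕ → Prop) (M : Finset (ℕ × ℕ)) : Prop :=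
  (∀ e ∈ M, e.1 ∈ B ∧ e.2 ∈ S ∧ g e.1 e.2) ∧
  ∀ e ∈ M, ∀ e' ∈ M, e ≠ e' → e.1 ≠ e'.1 ∧ e.2 ≠ e'.2

/-- `W B S g v` is the maximum total weight of a matching between buyers `B` and sellers `S`
along edges of `g`, where the weight of edge (i, j) is `v i j`. -/
noncomputable def W (B S : Finset ℕ) (g : ℕ → ℕ → Prop) (v : ℕ → ℕ → ℝ) : ℝ :=
  sSup {x | ∃ M : Finset (ℕ × ℕ), IsMatching B S g M ∧ x = ∑ e ∈ M, v e.1 e.2}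

/-- The graph `g` augmented so that every seller in `P` (the on-platform sellers) is
connected to all buyers. -/
def gPlat (g : ℕ → ℕ → Prop) (P : Finset ℕ) : ℕ → ℕ → Prop :=
  fun i j => g i j ∨ j ∈ P

/-- `topSum v A k` is the sum of the `k` largest values `v i` over `i ∈ A`
(or of all of them if `|A| < k`), expressed as the maximum sum over subsets of
`A` of size at most `k` (for nonnegative values). -/
noncomputable def topSum (v : ℕ → ℝ) (A : Finset ℕ) (k : ℕ) : ℝ :=
  sSup {x | ∃ T ⊆ A, T.card ≤ k ∧ x = ∑ i ∈ T, v i}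

/-- The maximum competitive price of seller `j` when the set `P` of sellers is on the
platform: `j`'s marginal contribution to the optimal welfare under the augmented graph. -/
noncomputable def price (B S : Finset ℕ) (g : ℕ → ℕ → Prop) (v : ℕ → ℕ → ℝ)
    (P : Finset ℕ) (j : ℕ) : ℝ :=
  W B S (gPlat g P) v - W B (S.erase j) (gPlat g P) v

/-- Pure Platform Equilibrium at transaction-fee fraction `α`: the set `P ⊆ S` of sellers
joins the platform; an on-platform seller receives `(1−α)` times her maximum competitive
price and an off-platform seller her full maximum competitive price; no seller gains by
unilaterally switching her decision. -/
noncomputable def IsPE (B S : Finset ℕ) (g : ℕ → ℕ → Prop) (v : ℕ → ℕ → ℝ)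
    (α : ℝ) (P : Finset ℕ) : Prop :=
  P ⊆ S ∧
  (∀ j ∈ P, price B S g v (P.erase j) j ≤ (1 - α) * price B S g v P j) ∧
  (∀ j ∈ S, j ∉ P → (1 - α) * price B S g v (insert j P) j ≤ price B S g v P j)

/- ### Auxiliary lemmas -/

lemma isMatching_subset {B S : Finset ℕ} {g : ℕ → ℕ → Prop} {M : Finset (ℕ × ℕ)}
    (h : IsMatching B S g M) : M ⊆ B ×ˢ S := by
  intro e he
  rcases h.1 e he with ⟨h1, h2, _⟩
  simp [Finset.mem_product, h1, h2]

lemma isMatching_empty (B S : Finset ℕ) (g : ℕ → ℕ → Prop) :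
    IsMatching B S g (∅ : Finset (ℕ × ℕ)) := by
  constructor <;> simp

lemma wset_finite (B S : Finset ℕ) (g : ℕ → ℕ → Prop) (v : ℕ → ℕ → ℝ) :
    {x | ∃ M : Finset (ℕ × ℕ), IsMatching B S g M ∧ x = ∑ e ∈ M, v e.1 e.2}.Finite := by
  apply Set.Finite.subset
    (Set.Finite.image (f := fun M : Finset (ℕ × ℕ) => ∑ e ∈ M, v e.1 e.2)
      ((B ×ˢ S).powerset : Finset (Finset (ℕ × ℕ))).finite_toSet)
  rintro x ⟨M, hM, rfl⟩
  exact ⟨M, Finset.mem_coe.mpr (Finset.mem_powerset.mpr (isMatching_subset hM)), rfl⟩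

lemma wset_nonempty (B S : Finset ℕ) (g : ℕ → ℕ → Prop) (v : ℕ → ℕ → ℝ) :
    {x | ∃ M : Finset (ℕ × ℕ), IsMatching B S g M ∧ x = ∑ e ∈ M, v e.1 e.2}.Nonempty :=
  ⟨0, ∅, isMatching_empty B S g, by simp⟩

lemma le_W {B S : Finset ℕ} {g : ℕ → ℕ → Prop} {v : ℕ → ℕ → ℝ} {M : Finset (ℕ × ℕ)}
    (h : IsMatching B S g M) : ∑ e ∈ M, v e.1 e.2 ≤ W B S g v :=
  le_csSup (wset_finite B S g v).bddAbove ⟨M, h, rfl⟩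

lemma W_attained (B S : Finset ℕ) (g : ℕ → ℕ → Prop) (v : ℕ → ℕ → ℝ) :
    ∃ M : Finset (ℕ × ℕ), IsMatching B S g M ∧ W B S g v = ∑ e ∈ M, v e.1 e.2 :=
  Set.Nonempty.csSup_mem (wset_nonempty B S g v) (wset_finite B S g v)

lemma W_mono {B S S' : Finset ℕ} (g : ℕ → ℕ → Prop) (v : ℕ → ℕ → ℝ) (hS : S' ⊆ S) :
    W B S' g v ≤ W B S g v := by
  apply csSup_le (wset_nonempty B S' g v)
  rintro x ⟨M, hM, rfl⟩
  exact le_W ⟨fun e he => ⟨(hM.1 e he).1, hS (hM.1 e he).2.1, (hM.1 e he).2.2⟩, hM.2⟩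

/-- Key lemma (alternating-path argument): if `M₀` is an optimal matching under `g` whose
sellers avoid `P'`, and `t` is a seller unmatched in `M₀` and not in `P'`, then any
matching under `gPlat g P'` can be converted into one avoiding `t` of at least the
same weight. -/
lemma remove_seller (g : ℕ → ℕ → Prop) (v : ℕ → ℝ) (hv : ∀ i, 0 ≤ v i) (P' : Finset ℕ) :
    ∀ n (B S : Finset ℕ) (M M₀ : Finset (ℕ × ℕ)) (t : ℕ),
      M.card ≤ n →
      IsMatching B S (gPlat g P') M →
      IsMatching B S g M₀ →
      (∀ N, IsMatching B S g N → ∑ e ∈ N, v e.1 ≤ ∑ e ∈ M₀, v e.1) →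
      (∀ e ∈ M₀, e.2 ∉ P') →
      t ∉ P' →
      (∀ e ∈ M₀, e.2 ≠ t) →
      ∃ M', IsMatching B (S.erase t) (gPlat g P') M' ∧
        ∑ e ∈ M, v e.1 ≤ ∑ e ∈ M', v e.1 := by
  intro n
  induction n with
  | zero =>
    intro B S M M₀ t hcard hM _ _ _ _ _
    have hMe : M = ∅ := Finset.card_eq_zero.mp (Nat.le_zero.mp hcard)
    subst hMe
    exact ⟨∅, isMatching_empty _ _ _, le_rfl⟩
  | succ n ih =>
    intro B S M M₀ t hcard hM hM₀ hopt hP₀ htP ht₀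
    by_cases htM : ∀ e ∈ M, e.2 ≠ t
    · refine ⟨M, ⟨fun e he => ⟨(hM.1 e he).1,
        Finset.mem_erase.2 ⟨htM e he, (hM.1 e he).2.1⟩, (hM.1 e he).2.2⟩, hM.2⟩, le_rfl⟩
    · push_neg at htM
      obtain ⟨e₀, he₀M, he₀t⟩ := htM
      have hi₀B : e₀.1 ∈ B := (hM.1 e₀ he₀M).1
      have htS : t ∈ S := he₀t ▸ (hM.1 e₀ he₀M).2.1
      have hgi₀t : g e₀.1 t := by
        rcases (hM.1 e₀ he₀M).2.2 with h | h
        · exact he₀t ▸ h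
        · exact absurd (he₀t ▸ h) htP
      -- erasing e₀ keeps other edges away from e₀.1 and t
      have hdisj : ∀ e ∈ M, e ≠ e₀ → e.1 ≠ e₀.1 ∧ e.2 ≠ t := by
        intro e he hne
        obtain ⟨h1, h2⟩ := hM.2 e he e₀ he₀M hne
        exact ⟨h1, he₀t ▸ h2⟩
      have hsumM : ∑ e ∈ M, v e.1 = v e₀.1 + ∑ e ∈ M.erase e₀, v e.1 :=
        (Finset.add_sum_erase M (fun e => v e.1) he₀M).symm
      by_cases hi₀ : ∃ e₁ ∈ M₀, e₁.1 = e₀.1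
      · -- Case B: buyer e₀.1 is matched in M₀ to some seller s₁
        obtain ⟨e₁, he₁M₀, he₁1⟩ := hi₀
        have hs₁S : e₁.2 ∈ S := (hM₀.1 e₁ he₁M₀).2.1
        have hgs₁ : g e₁.1 e₁.2 := (hM₀.1 e₁ he₁M₀).2.2
        have hs₁P : e₁.2 ∉ P' := hP₀ e₁ he₁M₀
        have hs₁t : e₁.2 ≠ t := ht₀ e₁ he₁M₀
        have hdisj₀ : ∀ e ∈ M₀, e ≠ e₁ → e.1 ≠ e₀.1 ∧ e.2 ≠ e₁.2 := by
          intro e he hne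
          obtain ⟨h1, h2⟩ := hM₀.2 e he e₁ he₁M₀ hne
          exact ⟨he₁1 ▸ h1, h2⟩
        -- shrunken instance
        have hM₁ : IsMatching (B.erase e₀.1) (S.erase t) (gPlat g P') (M.erase e₀) := by
          constructor
          · intro e he
            obtain ⟨hne, heM⟩ := Finset.mem_erase.mp he
            obtain ⟨h1, h2⟩ := hdisj e heM hne
            exact ⟨Finset.mem_erase.2 ⟨h1, (hM.1 e heM).1⟩,
              Finset.mem_erase.2 ⟨h2, (hM.1 e heM).2.1⟩, (hM.1 e heM).2.2⟩
          · intro e he e' he' hne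
            exact hM.2 e (Finset.mem_of_mem_erase he) e' (Finset.mem_of_mem_erase he') hne
        have hM₀₁ : IsMatching (B.erase e₀.1) (S.erase t) g (M₀.erase e₁) := by
          constructor
          · intro e he
            obtain ⟨hne, heM⟩ := Finset.mem_erase.mp he
            exact ⟨Finset.mem_erase.2 ⟨(hdisj₀ e heM hne).1, (hM₀.1 e heM).1⟩,
              Finset.mem_erase.2 ⟨ht₀ e heM, (hM₀.1 e heM).2.1⟩, (hM₀.1 e heM).2.2⟩
          · intro e he e' he' hne
            exact hM₀.2 e (Finset.mem_of_mem_erase he) e' (Finset.mem_of_mem_erase he') hne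
        have hsumM₀ : ∑ e ∈ M₀, v e.1 = v e₀.1 + ∑ e ∈ M₀.erase e₁, v e.1 := by
          rw [← Finset.add_sum_erase M₀ (fun e => v e.1) he₁M₀, he₁1]
        have hopt₁ : ∀ N, IsMatching (B.erase e₀.1) (S.erase t) g N →
            ∑ e ∈ N, v e.1 ≤ ∑ e ∈ M₀.erase e₁, v e.1 := by
          intro N hN
          have hnotmem : (e₀.1, t) ∉ N := by
            intro hmem
            have := (hN.1 _ hmem).2.1
            exact (Finset.mem_erase.mp this).1 rfl
          have hN' : IsMatching B S g (insert (e₀.1, t) N) := by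
            constructor
            · intro e he
              rcases Finset.mem_insert.mp he with rfl | he
              · exact ⟨hi₀B, htS, hgi₀t⟩
              · exact ⟨Finset.mem_of_mem_erase (hN.1 e he).1,
                  Finset.mem_of_mem_erase (hN.1 e he).2.1, (hN.1 e he).2.2⟩
            · intro e he e' he' hne
              have key : ∀ f ∈ N, f.1 ≠ e₀.1 ∧ f.2 ≠ t := by
                intro f hf
                exact ⟨(Finset.mem_erase.mp (hN.1 f hf).1).1,
                  (Finset.mem_erase.mp (hN.1 f hf).2.1).1⟩
              rcases Finset.mem_insert.mp he with rfl | he <;>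
                rcases Finset.mem_insert.mp he' with rfl | he'
              · exact absurd rfl hne
              · exact ⟨fun h => (key e' he').1 h.symm, fun h => (key e' he').2 h.symm⟩
              · exact key e he
              · exact hN.2 e he e' he' hne
          have := hopt _ hN'
          rw [Finset.sum_insert hnotmem, hsumM₀] at this
          linarith
        have hcard₁ : (M.erase e₀).card ≤ n := by
          have := Finset.card_erase_of_mem he₀M
          omega
        obtain ⟨M₂, hM₂, hM₂sum⟩ := ih (B.erase e₀.1) (S.erase t) (M.erase e₀)
          (M₀.erase e₁) e₁.2 hcard₁ hM₁ hM₀₁ hopt₁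
          (fun e he => hP₀ e (Finset.mem_of_mem_erase he)) hs₁P
          (fun e he => (hM₀.2 e (Finset.mem_of_mem_erase he) e₁ he₁M₀
            (Finset.mem_erase.mp he).1).2)
        -- M' = insert (e₀.1, e₁.2) M₂
        have hkey₂ : ∀ f ∈ M₂, f.1 ≠ e₀.1 ∧ f.2 ≠ e₁.2 ∧ f.2 ≠ t := by
          intro f hf
          refine ⟨(Finset.mem_erase.mp (hM₂.1 f hf).1).1,
            (Finset.mem_erase.mp (hM₂.1 f hf).2.1).1, ?_⟩
          have := Finset.mem_of_mem_erase (hM₂.1 f hf).2.1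
          exact (Finset.mem_erase.mp this).1
        have hnm : (e₀.1, e₁.2) ∉ M₂ := fun h => (hkey₂ _ h).2.1 rfl
        refine ⟨insert (e₀.1, e₁.2) M₂, ⟨?_, ?_⟩, ?_⟩
        · intro e he
          rcases Finset.mem_insert.mp he with rfl | he
          · exact ⟨hi₀B, Finset.mem_erase.2 ⟨hs₁t, hs₁S⟩, Or.inl (he₁1 ▸ hgs₁)⟩
          · refine ⟨Finset.mem_of_mem_erase (hM₂.1 e he).1, ?_, (hM₂.1 e he).2.2⟩
            exact Finset.mem_of_mem_erase (hM₂.1 e he).2.1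
        · intro e he e' he' hne
          rcases Finset.mem_insert.mp he with rfl | he <;>
            rcases Finset.mem_insert.mp he' with rfl | he'
          · exact absurd rfl hne
          · exact ⟨fun h => (hkey₂ e' he').1 h.symm, fun h => (hkey₂ e' he').2.1 h.symm⟩
          · exact ⟨(hkey₂ e he).1, (hkey₂ e he).2.1⟩
          · exact hM₂.2 e he e' he' hne
        · rw [Finset.sum_insert hnm, hsumM]
          simpa using hM₂sum
      · -- Case A: buyer e₀.1 is unmatched in M₀; then v e₀.1 = 0
        push_neg at hi₀
        have hnotmem : (e₀.1, t) ∉ M₀ := fun h => ht₀ _ h rfl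
        have hN' : IsMatching B S g (insert (e₀.1, t) M₀) := by
          constructor
          · intro e he
            rcases Finset.mem_insert.mp he with rfl | he
            · exact ⟨hi₀B, htS, hgi₀t⟩
            · exact hM₀.1 e he
          · intro e he e' he' hne
            rcases Finset.mem_insert.mp he with rfl | he <;>
              rcases Finset.mem_insert.mp he' with rfl | he'
            · exact absurd rfl hne
            · exact ⟨fun h => hi₀ e' he' h.symm, fun h => ht₀ e' he' h.symm⟩
            · exact ⟨hi₀ e he, ht₀ e he⟩
            · exact hM₀.2 e he e' he' hne
        have hle := hopt _ hN'
        rw [Finset.sum_insert hnotmem] at hle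
        have hv0 : v e₀.1 = 0 := le_antisymm (by linarith) (hv _)
        refine ⟨M.erase e₀, ⟨?_, ?_⟩, ?_⟩
        · intro e he
          obtain ⟨hne, heM⟩ := Finset.mem_erase.mp he
          exact ⟨(hM.1 e heM).1,
            Finset.mem_erase.2 ⟨(hdisj e heM hne).2, (hM.1 e heM).2.1⟩, (hM.1 e heM).2.2⟩
        · intro e he e' he' hne
          exact hM.2 e (Finset.mem_of_mem_erase he) e' (Finset.mem_of_mem_erase he') hne
        · rw [hsumM, hv0]; simp

/-- In a homogeneous-goods market, let `M₀` be an optimal matching under `G` and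
`S̄^G = S \ {transacting sellers}`. At transaction fee `α = 1`, every subset
`P ⊆ S̄^G` joining the platform is a pure Platform Equilibrium. -/
theorem alpha_one_equilibrium (B S : Finset ℕ) (g : ℕ → ℕ → Prop)
    (v : ℕ → ℝ) (hv : ∀ i, 0 ≤ v i)
    (M₀ : Finset (ℕ × ℕ)) (hM₀ : IsMatching B S g M₀)
    (hopt : ∑ e ∈ M₀, v e.1 = W B S g (fun i _ => v i))
    (P : Finset ℕ) (hP : P ⊆ S \ M₀.image Prod.snd) :
    IsPE B S g (fun i _ => v i) 1 P := by
  have hPS : P ⊆ S := fun j hj => (Finset.mem_sdiff.mp (hP hj)).1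
  refine ⟨hPS, ?_, ?_⟩
  · intro j hj
    have hjbar := Finset.mem_sdiff.mp (hP hj)
    have hjP' : j ∉ P.erase j := fun h => (Finset.mem_erase.mp h).1 rfl
    have hjM₀ : ∀ e ∈ M₀, e.2 ≠ j := by
      intro e he heq
      exact hjbar.2 (Finset.mem_image.2 ⟨e, he, heq⟩)
    have hPM₀ : ∀ e ∈ M₀, e.2 ∉ P.erase j := by
      intro e he hmem
      have : e.2 ∈ P := Finset.mem_of_mem_erase hmem
      exact (Finset.mem_sdiff.mp (hP this)).2 (Finset.mem_image.2 ⟨e, he, rfl⟩)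
    have hoptM₀ : ∀ N, IsMatching B S g N → ∑ e ∈ N, v e.1 ≤ ∑ e ∈ M₀, v e.1 := by
      intro N hN
      rw [hopt]
      exact le_W (v := fun i _ => v i) hN
    obtain ⟨M, hM, hMW⟩ := W_attained B S (gPlat g (P.erase j)) (fun i _ => v i)
    obtain ⟨M', hM', hM'sum⟩ := remove_seller g v hv (P.erase j) M.card B S M M₀ j
      le_rfl hM hM₀ hoptM₀ hPM₀ hjP' hjM₀
    have h1 : W B S (gPlat g (P.erase j)) (fun i _ => v i) ≤
        W B (S.erase j) (gPlat g (P.erase j)) (fun i _ => v i) := by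
      calc W B S (gPlat g (P.erase j)) (fun i _ => v i) = ∑ e ∈ M, v e.1 := hMW
        _ ≤ ∑ e ∈ M', v e.1 := hM'sum
        _ ≤ _ := le_W (v := fun i _ => v i) hM'
    simp only [price]
    linarith
  · intro j hjS hjP
    have := W_mono (B := B) (gPlat g P) (fun i _ => v i) (Finset.erase_subset j S)
    simp only [price]
    linarith
end

section
/- There exists a market with general unit-demand valuations and a transaction fee α ∈ [0,1] for which no pure Platform Equilibrium exists. Concretely, in the 4-buyer 3-seller market with direct edges (A,a),(B,b),(C,c) all of value 1, missing-link values v_{Ba}=3.05, v_{Bc}=1.15, v_{Cb}=1.1, v_{Dc}=0.05, all other values 0, and fee α = 1/2, every one of the 8 pure strategy profiles admits a profitable deviation by some seller. -/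
open Finset

set_option maxRecDepth 8000

def vn : ℕ → ℕ → ℕ := fun i j =>
  if i = j then 20
  else if i = 1 ∧ j = 0 then 61
  else if i = 1 ∧ j = 2 then 23
  else if i = 2 ∧ j = 1 then 22
  else if i = 3 ∧ j = 2 then 1
  else 0

instance (B S : Finset ℕ) (g : ℕ → ℕ → Prop) [DecidableRel g] (M : Finset (ℕ × ℕ)) :
    Decidable (IsMatching B S g M) :=
  decidable_of_iff ((∀ e ∈ M, e.1 ∈ B ∧ e.2 ∈ S ∧ g e.1 e.2) ∧
    ∀ e ∈ M, ∀ e' ∈ M, e ≠ e' → e.1 ≠ e'.1 ∧ e.2 ≠ e'.2) Iff.rfl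

instance (P : Finset ℕ) : DecidableRel (gPlat (fun i j : ℕ => i = j) P) :=
  fun i j => decidable_of_iff (i = j ∨ j ∈ P) Iff.rfl

lemma W_eq (B S : Finset ℕ) (g : ℕ → ℕ → Prop) [DecidableRel g] (n : ℕ)
    (hub : ∀ M ∈ ((B ×ˢ S).filter fun e => vn e.1 e.2 ≠ 0).powerset,
      IsMatching B S g M → ∑ e ∈ M, vn e.1 e.2 ≤ n)
    (M₀ : Finset (ℕ × ℕ)) (h₀ : IsMatching B S g M₀)
    (hs : ∑ e ∈ M₀, vn e.1 e.2 = n) :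
    W B S g (fun i j => (vn i j : ℝ) / 20) = (n : ℝ) / 20 := by
  have key : ∀ M : Finset (ℕ × ℕ), IsMatching B S g M →
      ∑ e ∈ M, ((vn e.1 e.2 : ℝ) / 20) ≤ (n : ℝ) / 20 := by
    intro M hM
    set M' : Finset (ℕ × ℕ) := M.filter (fun e => vn e.1 e.2 ≠ 0) with hM'def
    have hMsub : M ⊆ B ×ˢ S := by
      intro e he
      rcases hM.1 e he with ⟨h1, h2, _⟩
      exact Finset.mem_product.2 ⟨h1, h2⟩
    have hsub : M' ∈ ((B ×ˢ S).filter fun e => vn e.1 e.2 ≠ 0).powerset := by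
      rw [Finset.mem_powerset]
      exact Finset.filter_subset_filter _ hMsub
    have hM'match : IsMatching B S g M' := by
      constructor
      · intro e he; exact hM.1 e (Finset.mem_of_mem_filter e he)
      · intro e he e' he' hne
        exact hM.2 e (Finset.mem_of_mem_filter e he) e' (Finset.mem_of_mem_filter e' he') hne
    have hsum : ∑ e ∈ M', vn e.1 e.2 = ∑ e ∈ M, vn e.1 e.2 :=
      Finset.sum_filter_ne_zero M
    have hle : ∑ e ∈ M, vn e.1 e.2 ≤ n := by
      rw [← hsum]; exact hub M' hsub hM'match
    rw [← Finset.sum_div]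
    have hc : ((∑ e ∈ M, vn e.1 e.2 : ℕ) : ℝ) ≤ (n : ℝ) := by exact_mod_cast hle
    push_cast at hc ⊢
    linarith
  have hmem0 : ((n : ℝ) / 20) ∈ {x | ∃ M : Finset (ℕ × ℕ), IsMatching B S g M ∧
      x = ∑ e ∈ M, ((vn e.1 e.2 : ℝ) / 20)} := by
    refine ⟨M₀, h₀, ?_⟩
    rw [← Finset.sum_div]
    norm_cast
    rw [hs]
  apply le_antisymm
  · apply csSup_le ⟨_, hmem0⟩
    rintro x ⟨M, hM, rfl⟩
    exact key M hM
  · exact le_csSup ⟨(n : ℝ) / 20, by rintro x ⟨M, hM, rfl⟩; exact key M hM⟩ hmem0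

lemma priceW (B S : Finset ℕ) (v : ℕ → ℕ → ℝ) (hv : v = fun i j => (vn i j : ℝ) / 20)
    (P : Finset ℕ) (j : ℕ) (n m : ℕ)
    (hub1 : ∀ M ∈ ((B ×ˢ S).filter fun e => vn e.1 e.2 ≠ 0).powerset,
      IsMatching B S (gPlat (fun i j => i = j) P) M → ∑ e ∈ M, vn e.1 e.2 ≤ n)
    (M₁ : Finset (ℕ × ℕ)) (h₁ : IsMatching B S (gPlat (fun i j => i = j) P) M₁)
    (hs₁ : ∑ e ∈ M₁, vn e.1 e.2 = n)
    (hub2 : ∀ M ∈ ((B ×ˢ (S.erase j)).filter fun e => vn e.1 e.2 ≠ 0).powerset,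
      IsMatching B (S.erase j) (gPlat (fun i j => i = j) P) M → ∑ e ∈ M, vn e.1 e.2 ≤ m)
    (M₂ : Finset (ℕ × ℕ)) (h₂ : IsMatching B (S.erase j) (gPlat (fun i j => i = j) P) M₂)
    (hs₂ : ∑ e ∈ M₂, vn e.1 e.2 = m) :
    price B S (fun i j => i = j) v P j = (n : ℝ) / 20 - (m : ℝ) / 20 := by
  rw [price, hv, W_eq _ _ _ n hub1 M₁ h₁ hs₁, W_eq _ _ _ m hub2 M₂ h₂ hs₂]

lemma P_cases (P : Finset ℕ) (hsub : P ⊆ ({0, 1, 2} : Finset ℕ)) :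
    P = ∅ ∨ P = {0} ∨ P = {1} ∨ P = {2} ∨ P = {0, 1} ∨ P = {0, 2} ∨ P = {1, 2} ∨
      P = {0, 1, 2} := by
  have hmem : P ∈ ({0, 1, 2} : Finset ℕ).powerset := Finset.mem_powerset.2 hsub
  have hpow : ({0, 1, 2} : Finset ℕ).powerset =
      {∅, {0}, {1}, {2}, {0, 1}, {0, 2}, {1, 2}, {0, 1, 2}} := by decide
  rw [hpow] at hmem
  simp only [Finset.mem_insert, Finset.mem_singleton] at hmem
  tauto

/-- Non-existence of pure Platform Equilibria: in the 4-buyer (A,B,C,D = 0,1,2,3)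
3-seller (a,b,c = 0,1,2) market with direct edges (A,a),(B,b),(C,c) of value 1,
off-graph values v_{Ba}=3.05, v_{Bc}=1.15, v_{Cb}=1.1, v_{Dc}=0.05, and all other
values 0, there is no pure Platform Equilibrium at transaction fee α = 1/2. -/
theorem no_pure_platform_equilibrium :
    ¬ ∃ P : Finset ℕ,
        IsPE ({0, 1, 2, 3} : Finset ℕ) ({0, 1, 2} : Finset ℕ)
          (fun i j => i = j)
          (fun i j =>
            if i = j then 1
            else if i = 1 ∧ j = 0 then 3.05
            else if i = 1 ∧ j = 2 then 1.15
            else if i = 2 ∧ j = 1 then 1.1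
            else if i = 3 ∧ j = 2 then 0.05
            else 0)
          (1 / 2) P := by
  rintro ⟨P, hPE⟩
  unfold IsPE at hPE
  obtain ⟨hsub, hin, hout⟩ := hPE
  have hv : (fun i j : ℕ =>
      if i = j then (1 : ℝ)
      else if i = 1 ∧ j = 0 then 3.05
      else if i = 1 ∧ j = 2 then 1.15
      else if i = 2 ∧ j = 1 then 1.1
      else if i = 3 ∧ j = 2 then 0.05
      else 0) = fun i j => (vn i j : ℝ) / 20 := by
    funext i j
    simp only [vn]
    split_ifs <;> norm_num
  rw [hv] at hin hout
  rcases P_cases P hsub with rfl | rfl | rfl | rfl | rfl | rfl | rfl | rfl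
  · have h := hout 0 (by decide) (by decide)
    rw [priceW {0, 1, 2, 3} {0, 1, 2} (fun i j => (vn i j : ℝ) / 20) rfl (insert 0 ∅) 0 81 40 (by decide) ({(1, 0), (2, 2)} : Finset (ℕ × ℕ)) (by decide) (by decide) (by decide) ({(1, 1), (2, 2)} : Finset (ℕ × ℕ)) (by decide) (by decide),
        priceW {0, 1, 2, 3} {0, 1, 2} (fun i j => (vn i j : ℝ) / 20) rfl (∅) 0 60 40 (by decide) ({(0, 0), (1, 1), (2, 2)} : Finset (ℕ × ℕ)) (by decide) (by decide) (by decide) ({(1, 1), (2, 2)} : Finset (ℕ × ℕ)) (by decide) (by decide)] at h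
    norm_num at h
  · have h := hout 1 (by decide) (by decide)
    rw [priceW {0, 1, 2, 3} {0, 1, 2} (fun i j => (vn i j : ℝ) / 20) rfl (insert 1 {0}) 1 83 81 (by decide) ({(1, 0), (2, 1)} : Finset (ℕ × ℕ)) (by decide) (by decide) (by decide) ({(1, 0), (2, 2)} : Finset (ℕ × ℕ)) (by decide) (by decide),
        priceW {0, 1, 2, 3} {0, 1, 2} (fun i j => (vn i j : ℝ) / 20) rfl ({0}) 1 81 81 (by decide) ({(1, 0), (2, 2)} : Finset (ℕ × ℕ)) (by decide) (by decide) (by decide) ({(1, 0), (2, 2)} : Finset (ℕ × ℕ)) (by decide) (by decide)] at h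
    norm_num at h
  · have h := hin 1 (by decide)
    rw [priceW {0, 1, 2, 3} {0, 1, 2} (fun i j => (vn i j : ℝ) / 20) rfl (Finset.erase {1} 1) 1 60 40 (by decide) ({(0, 0), (1, 1), (2, 2)} : Finset (ℕ × ℕ)) (by decide) (by decide) (by decide) ({(0, 0), (2, 2)} : Finset (ℕ × ℕ)) (by decide) (by decide),
        priceW {0, 1, 2, 3} {0, 1, 2} (fun i j => (vn i j : ℝ) / 20) rfl ({1}) 1 60 40 (by decide) ({(0, 0), (1, 1), (2, 2)} : Finset (ℕ × ℕ)) (by decide) (by decide) (by decide) ({(0, 0), (2, 2)} : Finset (ℕ × ℕ)) (by decide) (by decide)] at h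
    norm_num at h
  · have h := hin 2 (by decide)
    rw [priceW {0, 1, 2, 3} {0, 1, 2} (fun i j => (vn i j : ℝ) / 20) rfl (Finset.erase {2} 2) 2 60 40 (by decide) ({(0, 0), (1, 1), (2, 2)} : Finset (ℕ × ℕ)) (by decide) (by decide) (by decide) ({(0, 0), (1, 1)} : Finset (ℕ × ℕ)) (by decide) (by decide),
        priceW {0, 1, 2, 3} {0, 1, 2} (fun i j => (vn i j : ℝ) / 20) rfl ({2}) 2 60 40 (by decide) ({(0, 0), (1, 1), (2, 2)} : Finset (ℕ × ℕ)) (by decide) (by decide) (by decide) ({(0, 0), (1, 1)} : Finset (ℕ × ℕ)) (by decide) (by decide)] at h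
    norm_num at h
  · have h := hout 2 (by decide) (by decide)
    rw [priceW {0, 1, 2, 3} {0, 1, 2} (fun i j => (vn i j : ℝ) / 20) rfl (insert 2 {0, 1}) 2 84 83 (by decide) ({(1, 0), (2, 1), (3, 2)} : Finset (ℕ × ℕ)) (by decide) (by decide) (by decide) ({(1, 0), (2, 1)} : Finset (ℕ × ℕ)) (by decide) (by decide),
        priceW {0, 1, 2, 3} {0, 1, 2} (fun i j => (vn i j : ℝ) / 20) rfl ({0, 1}) 2 83 83 (by decide) ({(1, 0), (2, 1)} : Finset (ℕ × ℕ)) (by decide) (by decide) (by decide) ({(1, 0), (2, 1)} : Finset (ℕ × ℕ)) (by decide) (by decide)] at h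
    norm_num at h
  · have h := hin 2 (by decide)
    rw [priceW {0, 1, 2, 3} {0, 1, 2} (fun i j => (vn i j : ℝ) / 20) rfl (Finset.erase {0, 2} 2) 2 81 61 (by decide) ({(1, 0), (2, 2)} : Finset (ℕ × ℕ)) (by decide) (by decide) (by decide) ({(1, 0)} : Finset (ℕ × ℕ)) (by decide) (by decide),
        priceW {0, 1, 2, 3} {0, 1, 2} (fun i j => (vn i j : ℝ) / 20) rfl ({0, 2}) 2 81 61 (by decide) ({(1, 0), (2, 2)} : Finset (ℕ × ℕ)) (by decide) (by decide) (by decide) ({(1, 0)} : Finset (ℕ × ℕ)) (by decide) (by decide)] at h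
    norm_num at h
  · have h := hin 2 (by decide)
    rw [priceW {0, 1, 2, 3} {0, 1, 2} (fun i j => (vn i j : ℝ) / 20) rfl (Finset.erase {1, 2} 2) 2 60 42 (by decide) ({(0, 0), (1, 1), (2, 2)} : Finset (ℕ × ℕ)) (by decide) (by decide) (by decide) ({(0, 0), (2, 1)} : Finset (ℕ × ℕ)) (by decide) (by decide),
        priceW {0, 1, 2, 3} {0, 1, 2} (fun i j => (vn i j : ℝ) / 20) rfl ({1, 2}) 2 65 42 (by decide) ({(0, 0), (1, 2), (2, 1)} : Finset (ℕ × ℕ)) (by decide) (by decide) (by decide) ({(0, 0), (2, 1)} : Finset (ℕ × ℕ)) (by decide) (by decide)] at h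
    norm_num at h
  · have h := hin 0 (by decide)
    rw [priceW {0, 1, 2, 3} {0, 1, 2} (fun i j => (vn i j : ℝ) / 20) rfl (Finset.erase {0, 1, 2} 0) 0 65 45 (by decide) ({(0, 0), (1, 2), (2, 1)} : Finset (ℕ × ℕ)) (by decide) (by decide) (by decide) ({(1, 2), (2, 1)} : Finset (ℕ × ℕ)) (by decide) (by decide),
        priceW {0, 1, 2, 3} {0, 1, 2} (fun i j => (vn i j : ℝ) / 20) rfl ({0, 1, 2}) 0 84 45 (by decide) ({(1, 0), (2, 1), (3, 2)} : Finset (ℕ × ℕ)) (by decide) (by decide) (by decide) ({(1, 2), (2, 1)} : Finset (ℕ × ℕ)) (by decide) (by decide)] at h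
    norm_num at h
end

section
/- There exists a homogeneous-goods market with n buyers and n sellers in which the ratio of optimal welfare to the welfare at the revenue-maximizing Platform Equilibrium is at least H_n − o(1). Concretely, with no off-platform edges, buyer 1 valuing any item at n+ε and buyer i (2 ≤ i ≤ n) valuing any item at n/i: if the platform sets α = 1 and one seller joins, revenue is n+ε; if k ≥ 2 sellers join, revenue is at most n; so the revenue-maximizing equilibrium has welfare n+ε while the optimal welfare is n·H_n + ε. -/
open Finset

lemma topk_le (f : ℕ → ℝ) (hf : ∀ a b, 1 ≤ a → a ≤ b → f b ≤ f a) (hf0 : ∀ i, 0 ≤ f i)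
    (T : Finset ℕ) (hT : ∀ i ∈ T, 1 ≤ i) (m : ℕ) (hm : T.card ≤ m) :
    ∑ i ∈ T, f i ≤ ∑ i ∈ Finset.Icc 1 m, f i := by
  set r : ℕ → ℕ := fun i => (T.filter (· ≤ i)).card with hr
  have hr1 : ∀ i ∈ T, 1 ≤ r i := fun i hi =>
    card_pos.mpr ⟨i, mem_filter.mpr ⟨hi, le_refl i⟩⟩
  have hrle : ∀ i ∈ T, r i ≤ i := by
    intro i hi
    calc (T.filter (· ≤ i)).card ≤ (Finset.Icc 1 i).card := card_le_card (by
          intro x hx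
          rcases mem_filter.mp hx with ⟨hx1, hx2⟩
          exact mem_Icc.mpr ⟨hT x hx1, hx2⟩)
      _ = i := by simp
  have hrmono : ∀ i ∈ T, ∀ j ∈ T, i < j → r i < r j := by
    intro i hi j hj hij
    apply card_lt_card
    constructor
    · intro x hx
      rcases mem_filter.mp hx with ⟨h1, h2⟩
      exact mem_filter.mpr ⟨h1, h2.trans hij.le⟩
    · intro hsub
      have := hsub (mem_filter.mpr ⟨hj, le_refl j⟩)
      exact absurd (mem_filter.mp this).2 (not_le.mpr hij)
  have hinj : Set.InjOn r T := by
    intro a ha b hb hab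
    by_contra hne
    rcases lt_or_gt_of_ne hne with h | h
    · exact absurd hab (ne_of_lt (hrmono a ha b hb h))
    · exact absurd hab.symm (ne_of_lt (hrmono b hb a ha h))
  have hrbound : ∀ i ∈ T, r i ≤ m := fun i hi =>
    le_trans (card_le_card (filter_subset _ _)) hm
  calc ∑ i ∈ T, f i ≤ ∑ i ∈ T, f (r i) :=
        sum_le_sum (fun i hi => hf (r i) i (hr1 i hi) (hrle i hi))
    _ = ∑ j ∈ T.image r, f j := (sum_image (fun a ha b hb h => hinj ha hb h)).symm
    _ ≤ ∑ j ∈ Finset.Icc 1 m, f j := sum_le_sum_of_subset_of_nonneg (by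
          intro x hx
          rcases mem_image.mp hx with ⟨i, hi, rfl⟩
          exact mem_Icc.mpr ⟨hr1 i hi, hrbound i hi⟩) (fun i _ _ => hf0 i)
-- generic: sum over a matching equals sum of f over the image of fst
lemma matching_sum_le (f : ℕ → ℝ) (hf : ∀ a b, 1 ≤ a → a ≤ b → f b ≤ f a)
    (hf0 : ∀ i, 0 ≤ f i) (n : ℕ) (S' : Finset ℕ) (g : ℕ → ℕ → Prop)
    (M : Finset (ℕ × ℕ)) (hM : IsMatching (Finset.Icc 1 n) S' g M) (m : ℕ)
    (hcard : M.card ≤ m) :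
    ∑ e ∈ M, f e.1 ≤ ∑ i ∈ Finset.Icc 1 m, f i := by
  have hinj : Set.InjOn Prod.fst (M : Set (ℕ × ℕ)) := by
    intro a ha b hb hab
    by_contra hne
    exact (hM.2 a ha b hb hne).1 hab
  have hsum : ∑ e ∈ M, f e.1 = ∑ i ∈ M.image Prod.fst, f i :=
    (sum_image (fun a ha b hb h => hinj ha hb h)).symm
  rw [hsum]
  apply topk_le f hf hf0
  · intro i hi
    rcases mem_image.mp hi with ⟨e, he, rfl⟩
    exact (mem_Icc.mp (hM.1 e he).1).1
  · exact le_trans (card_image_le) hcard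

lemma W_plat_eq (f : ℕ → ℝ) (hf : ∀ a b, 1 ≤ a → a ≤ b → f b ≤ f a)
    (hf0 : ∀ i, 0 ≤ f i) (n : ℕ) (P S' : Finset ℕ)
    (hk : (P ∩ S').card ≤ n) :
    W (Finset.Icc 1 n) S' (gPlat (fun _ _ => False) P) (fun i _ => f i)
      = ∑ i ∈ Finset.Icc 1 (P ∩ S').card, f i := by
  set Q := P ∩ S' with hQ
  set k := Q.card with hkdef
  apply IsGreatest.csSup_eq
  constructor
  · refine ⟨Finset.image (fun j : Fin k => ((j : ℕ) + 1, Q.orderEmbOfFin rfl j))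
      Finset.univ, ⟨?_, ?_⟩, ?_⟩
    · intro e he
      rcases mem_image.mp he with ⟨j, _, rfl⟩
      refine ⟨mem_Icc.mpr ⟨Nat.le_add_left 1 _, ?_⟩, ?_, Or.inr ?_⟩
      · have : (j : ℕ) < k := j.2
        omega
      · exact (mem_inter.mp (Q.orderEmbOfFin_mem rfl j)).2
      · exact (mem_inter.mp (Q.orderEmbOfFin_mem rfl j)).1
    · intro e he e' he' hne
      rcases mem_image.mp he with ⟨j, _, rfl⟩
      rcases mem_image.mp he' with ⟨j', _, rfl⟩
      have hjj : j ≠ j' := by rintro rfl; exact hne rfl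
      constructor
      · simpa using fun h => hjj (Fin.ext h)
      · simp only [ne_eq]
        exact fun h => hjj ((Q.orderEmbOfFin rfl).injective h)
    · have hpairinj : Function.Injective
          (fun j : Fin k => ((j : ℕ) + 1, Q.orderEmbOfFin rfl j)) := by
        intro a b hab
        have := congrArg Prod.fst hab
        simp only at this
        exact Fin.ext (by omega)
      rw [sum_image (fun a _ b _ h => hpairinj h)]
      have hIcc : Finset.Icc 1 k = (Finset.range k).image (· + 1) := by
        ext x
        simp only [mem_Icc, mem_image, mem_range]
        constructor
        · rintro ⟨h1, h2⟩; exact ⟨x - 1, by omega, by omega⟩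
        · rintro ⟨a, ha, rfl⟩; omega
      rw [hIcc, sum_image (fun a _ b _ h => by omega)]
      rw [← Fin.sum_univ_eq_sum_range (fun i => f (i + 1))]
  · rintro x ⟨M, hM, rfl⟩
    have hcard : M.card ≤ k := by
      have hinj : Set.InjOn Prod.snd (M : Set (ℕ × ℕ)) := by
        intro a ha b hb hab
        by_contra hne
        exact (hM.2 a ha b hb hne).2 hab
      have : M.card = (M.image Prod.snd).card :=
        (card_image_of_injOn hinj).symm
      rw [this]
      apply card_le_card
      intro x hx
      rcases mem_image.mp hx with ⟨e, he, rfl⟩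
      rcases hM.1 e he with ⟨_, hS, hg⟩
      rcases hg with h | h
      · exact absurd h not_false
      · exact mem_inter.mpr ⟨h, hS⟩
    exact matching_sum_le f hf hf0 n S' _ M hM k hcard

lemma W_true_eq (f : ℕ → ℝ) (hf0 : ∀ i, 0 ≤ f i) (n : ℕ) :
    W (Finset.Icc 1 n) (Finset.Icc 1 n) (fun _ _ => True) (fun i _ => f i)
      = ∑ i ∈ Finset.Icc 1 n, f i := by
  apply IsGreatest.csSup_eq
  constructor
  · refine ⟨(Finset.Icc 1 n).image (fun i => (i, i)), ⟨?_, ?_⟩, ?_⟩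
    · intro e he
      rcases mem_image.mp he with ⟨i, hi, rfl⟩
      exact ⟨hi, hi, trivial⟩
    · intro e he e' he' hne
      rcases mem_image.mp he with ⟨i, _, rfl⟩
      rcases mem_image.mp he' with ⟨i', _, rfl⟩
      have : i ≠ i' := by rintro rfl; exact hne rfl
      exact ⟨this, this⟩
    · rw [sum_image (fun a _ b _ h => (Prod.ext_iff.mp h).1)]
  · rintro x ⟨M, hM, rfl⟩
    have hinj : Set.InjOn Prod.fst (M : Set (ℕ × ℕ)) := by
      intro a ha b hb hab
      by_contra hne
      exact (hM.2 a ha b hb hne).1 hab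
    have hsum : ∑ i ∈ M.image Prod.fst, f i = ∑ e ∈ M, f e.1 :=
      sum_image (fun a ha b hb h => hinj ha hb h)
    rw [show (∑ e ∈ M, (fun i (_ : ℕ) => f i) e.1 e.2) = ∑ e ∈ M, f e.1 from rfl, ← hsum]
    apply sum_le_sum_of_subset_of_nonneg
    · intro i hi
      rcases mem_image.mp hi with ⟨e, he, rfl⟩
      exact (hM.1 e he).1
    · exact fun i _ _ => hf0 i

/-- Lower bound instance for the Price of Anarchy in homogeneous-goods markets:
`n` buyers and `n` sellers, no off-platform edges, buyer 1 valuing any item at `n + ε`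
and buyer `i` (2 ≤ i ≤ n) valuing any item at `n/i`. The unconstrained optimal welfare is
`n·H_n + ε`; if a single seller joins the platform at `α = 1` the platform's revenue
(sum of on-platform prices) is `n + ε`, while if `k ≥ 2` sellers join it is at most `n`;
hence the ratio of optimal welfare to the welfare of the revenue-maximizing equilibrium,
`(n·H_n + ε)/(n + ε)`, is at least `H_n − H_n·ε/n = H_n − o(1)`. -/
theorem poa_lower_bound_homogeneous (n : ℕ) (hn : 1 ≤ n) (ε : ℝ) (hε : 0 < ε) :
    let B : Finset ℕ := Finset.Icc 1 n
    let S : Finset ℕ := Finset.Icc 1 n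
    let v : ℕ → ℕ → ℝ := fun i _ => if i = 1 then (n : ℝ) + ε else (n : ℝ) / i
    let H : ℝ := ∑ i ∈ Finset.Icc 1 n, (1 : ℝ) / i
    (W B S (fun _ _ => True) v = n * H + ε) ∧
    (∀ P ⊆ S, P.card = 1 →
      ∑ j ∈ P, price B S (fun _ _ => False) v P j = (n : ℝ) + ε) ∧
    (∀ P ⊆ S, 2 ≤ P.card →
      ∑ j ∈ P, price B S (fun _ _ => False) v P j ≤ (n : ℝ)) ∧
    (H - H * ε / n ≤ (n * H + ε) / ((n : ℝ) + ε)) := by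
  intro B S v H
  set f : ℕ → ℝ := fun i => if i = 1 then (n : ℝ) + ε else (n : ℝ) / i with hfdef
  have hf0 : ∀ i, 0 ≤ f i := by
    intro i
    simp only [hfdef]
    split
    · positivity
    · positivity
  have hf : ∀ a b, 1 ≤ a → a ≤ b → f b ≤ f a := by
    intro a b h1 hab
    have hb1 : (1:ℝ) ≤ (b:ℝ) := by exact_mod_cast le_trans h1 hab
    simp only [hfdef]
    by_cases ha : a = 1
    · subst ha
      by_cases hb : b = 1
      · subst hb; exact le_rfl
      · rw [if_neg hb, if_pos rfl]
        have hb0 : (0:ℝ) < b := by linarith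
        have : (n:ℝ)/b ≤ (n:ℝ) := by
          rw [div_le_iff₀ hb0]
          nlinarith [Nat.cast_nonneg (α := ℝ) n]
        linarith
    · have hb : b ≠ 1 := by omega
      rw [if_neg ha, if_neg hb]
      have ha0 : (0:ℝ) < a := by
        exact_mod_cast Nat.lt_of_lt_of_le Nat.zero_lt_one h1
      have hb0 : (0:ℝ) < b := by linarith
      rw [div_le_div_iff₀ hb0 ha0]
      exact mul_le_mul_of_nonneg_left (by exact_mod_cast hab) (Nat.cast_nonneg n)
  have hcardIcc : (Finset.Icc 1 n).card = n := by rw [Nat.card_Icc]; omega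
  have hfk : ∀ k, 2 ≤ k → f k = (n : ℝ) / k := by
    intro k hk; simp only [hfdef]; rw [if_neg (by omega)]
  have hIccsplit : ∀ k, 1 ≤ k →
      ∑ i ∈ Finset.Icc 1 k, f i = f k + ∑ i ∈ Finset.Icc 1 (k - 1), f i := by
    intro k hk
    have h1 : Finset.Icc 1 k = insert k (Finset.Icc 1 (k - 1)) := by
      ext x
      simp only [mem_Icc, mem_insert]
      omega
    rw [h1, sum_insert (by simp only [mem_Icc]; omega)]
  refine ⟨?_, ?_, ?_, ?_⟩
  · -- Part 1
    show W (Finset.Icc 1 n) (Finset.Icc 1 n) (fun _ _ => True) (fun i _ => f i)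
        = n * H + ε
    rw [W_true_eq f hf0 n]
    have hH : (n : ℝ) * H = ∑ i ∈ Finset.Icc 1 n, (n : ℝ) / i := by
      show (n:ℝ) * ∑ i ∈ Finset.Icc 1 n, (1:ℝ) / i = _
      rw [mul_sum]
      exact sum_congr rfl (fun i _ => mul_one_div _ _)
    rw [hH]
    have hsplit : ∀ i ∈ Finset.Icc 1 n,
        f i = (n : ℝ) / i + (if i = 1 then ε else 0) := by
      intro i hi
      simp only [hfdef]
      by_cases h : i = 1
      · subst h; norm_num
      · simp [h]
    rw [sum_congr rfl hsplit, sum_add_distrib, Finset.sum_ite_eq' (Finset.Icc 1 n) 1]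
    simp [hn]
  · -- Part 2
    intro P hP hcard
    obtain ⟨j, rfl⟩ := card_eq_one.mp hcard
    have hj : j ∈ Finset.Icc 1 n := hP (mem_singleton_self j)
    rw [sum_singleton]
    show W (Finset.Icc 1 n) (Finset.Icc 1 n) (gPlat (fun _ _ => False) {j}) (fun i _ => f i)
        - W (Finset.Icc 1 n) ((Finset.Icc 1 n).erase j) (gPlat (fun _ _ => False) {j})
            (fun i _ => f i) = (n : ℝ) + ε
    have h1 : (({j} : Finset ℕ) ∩ Finset.Icc 1 n).card = 1 := by
      rw [inter_eq_left.mpr (by simpa using hj)]; simp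
    have h2 : (({j} : Finset ℕ) ∩ (Finset.Icc 1 n).erase j).card = 0 := by
      rw [card_eq_zero]
      ext x
      simp only [mem_inter, mem_singleton, mem_erase, notMem_empty, iff_false]
      rintro ⟨rfl, hne, _⟩
      exact hne rfl
    rw [W_plat_eq f hf hf0 n {j} (Finset.Icc 1 n) (by rw [h1]; exact hn),
      W_plat_eq f hf hf0 n {j} ((Finset.Icc 1 n).erase j) (by rw [h2]; omega),
      h1, h2]
    simp [hfdef]
  · -- Part 3
    intro P hP hk2
    set k := P.card with hkdef
    have hkn : k ≤ n := by
      rw [hkdef]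
      calc P.card ≤ (Finset.Icc 1 n).card := card_le_card hP
        _ = n := hcardIcc
    have hprice : ∀ j ∈ P, price (Finset.Icc 1 n) (Finset.Icc 1 n)
        (fun _ _ => False) (fun i _ => f i) P j = (n : ℝ) / k := by
      intro j hj
      show W (Finset.Icc 1 n) (Finset.Icc 1 n) (gPlat (fun _ _ => False) P) (fun i _ => f i)
          - W (Finset.Icc 1 n) ((Finset.Icc 1 n).erase j) (gPlat (fun _ _ => False) P)
              (fun i _ => f i) = (n : ℝ) / k
      have h1 : (P ∩ Finset.Icc 1 n).card = k := by
        rw [inter_eq_left.mpr hP]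
      have h2 : (P ∩ (Finset.Icc 1 n).erase j).card = k - 1 := by
        have : P ∩ (Finset.Icc 1 n).erase j = P.erase j := by
          ext x
          simp only [mem_inter, mem_erase]
          constructor
          · rintro ⟨hx, hne, _⟩; exact ⟨hne, hx⟩
          · rintro ⟨hne, hx⟩; exact ⟨hx, hne, hP hx⟩
        rw [this, card_erase_of_mem hj]
      rw [W_plat_eq f hf hf0 n P (Finset.Icc 1 n) (by rw [h1]; exact hkn),
        W_plat_eq f hf hf0 n P ((Finset.Icc 1 n).erase j) (by rw [h2]; omega),
        h1, h2, hIccsplit k (by omega), hfk k hk2]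
      ring
    refine le_of_eq ?_
    calc ∑ j ∈ P, price (Finset.Icc 1 n) (Finset.Icc 1 n)
          (fun _ _ => False) (fun i _ => f i) P j
        = ∑ _j ∈ P, (n : ℝ) / k := sum_congr rfl hprice
      _ = (k : ℝ) * ((n : ℝ) / k) := by rw [sum_const, nsmul_eq_mul]
      _ = (n : ℝ) := by
          rw [mul_comm, div_mul_cancel₀]
          exact_mod_cast (by omega : k ≠ 0)
  · -- Part 4
    have hH0 : 0 ≤ H := sum_nonneg (fun i _ => by positivity)
    have hn0 : (0 : ℝ) < n := by exact_mod_cast hn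
    rw [le_div_iff₀ (by linarith)]
    have hne : (n : ℝ) ≠ 0 := ne_of_gt hn0
    have key : (H - H * ε / n) * ((n : ℝ) + ε) = n * H - H * ε ^ 2 / n := by
      field_simp
      ring
    rw [key]
    have : 0 ≤ H * ε ^ 2 / n := by positivity
    linarith
end

section
/- For every transaction fee α ∈ [0,1), the social welfare in any pure Platform Equilibrium is at least a (1−α)/(2−α)-fraction of the unconstrained optimal welfare W*: if P is a pure Platform Equilibrium set of on-platform sellers, then W(S,B,G(P)) ≥ ((1−α)/(2−α))·W*. -/
open Finset

namespace PlatformPoA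

/-! ### Basic facts about `W` -/

/-- Distinctness part of a matching. -/
def Dist (M : Finset (ℕ × ℕ)) : Prop :=
  ∀ e ∈ M, ∀ e' ∈ M, e ≠ e' → e.1 ≠ e'.1 ∧ e.2 ≠ e'.2

lemma Dist.eq_fst {M : Finset (ℕ × ℕ)} (h : Dist M) {e f : ℕ × ℕ}
    (he : e ∈ M) (hf : f ∈ M) (hef : e.1 = f.1) : e = f := by
  by_contra hne
  exact (h e he f hf hne).1 hef

lemma Dist.eq_snd {M : Finset (ℕ × ℕ)} (h : Dist M) {e f : ℕ × ℕ}
    (he : e ∈ M) (hf : f ∈ M) (hef : e.2 = f.2) : e = f := by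
  by_contra hne
  exact (h e he f hf hne).2 hef

lemma isMatching_empty (B S : Finset ℕ) (g : ℕ → ℕ → Prop) :
    IsMatching B S g (∅ : Finset (ℕ × ℕ)) := by
  constructor <;> intro e he <;> simp at he

lemma mset_finite (B S : Finset ℕ) (g : ℕ → ℕ → Prop) (v : ℕ → ℕ → ℝ) :
    {x | ∃ M : Finset (ℕ × ℕ), IsMatching B S g M ∧ x = ∑ e ∈ M, v e.1 e.2}.Finite := by
  apply Set.Finite.subset
    (Set.Finite.image (fun M : Finset (ℕ × ℕ) => ∑ e ∈ M, v e.1 e.2)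
      (Finset.finite_toSet ((B ×ˢ S).powerset)))
  rintro x ⟨M, hM, rfl⟩
  refine ⟨M, ?_, rfl⟩
  simp only [Finset.coe_powerset, Set.mem_preimage, Set.mem_powerset_iff,
    Finset.mem_coe, Finset.coe_subset]
  intro e he
  have := hM.1 e he
  exact Finset.mem_product.mpr ⟨this.1, this.2.1⟩

lemma mset_nonempty (B S : Finset ℕ) (g : ℕ → ℕ → Prop) (v : ℕ → ℕ → ℝ) :
    (0 : ℝ) ∈ {x | ∃ M : Finset (ℕ × ℕ), IsMatching B S g M ∧ x = ∑ e ∈ M, v e.1 e.2} :=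
  ⟨∅, isMatching_empty B S g, by simp⟩

lemma le_W {B S : Finset ℕ} {g : ℕ → ℕ → Prop} {v : ℕ → ℕ → ℝ} {M : Finset (ℕ × ℕ)}
    (hM : IsMatching B S g M) : (∑ e ∈ M, v e.1 e.2) ≤ W B S g v :=
  le_csSup (mset_finite B S g v).bddAbove ⟨M, hM, rfl⟩

lemma W_exists (B S : Finset ℕ) (g : ℕ → ℕ → Prop) (v : ℕ → ℕ → ℝ) :
    ∃ M : Finset (ℕ × ℕ), IsMatching B S g M ∧ W B S g v = ∑ e ∈ M, v e.1 e.2 :=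
  Set.Nonempty.csSup_mem ⟨0, mset_nonempty B S g v⟩ (mset_finite B S g v)

lemma W_nonneg (B S : Finset ℕ) (g : ℕ → ℕ → Prop) (v : ℕ → ℕ → ℝ) :
    0 ≤ W B S g v := by
  simpa using le_W (isMatching_empty B S g) (v := v)

lemma W_mono {B1 S1 B2 S2 : Finset ℕ} {g1 g2 : ℕ → ℕ → Prop} {v : ℕ → ℕ → ℝ}
    (h : ∀ M : Finset (ℕ × ℕ), IsMatching B1 S1 g1 M → IsMatching B2 S2 g2 M) :
    W B1 S1 g1 v ≤ W B2 S2 g2 v := by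
  apply csSup_le ⟨0, mset_nonempty B1 S1 g1 v⟩
  rintro x ⟨M, hM, rfl⟩
  exact le_W (h M hM)

/-! ### The core alternating-component exchange lemma -/

/-- Edges reachable from buyer `b` in the union of two matchings. -/
inductive MReach (M1 M2 : Finset (ℕ × ℕ)) (b : ℕ) : ℕ × ℕ → Prop
  | base (e : ℕ × ℕ) (he : e ∈ M1 ∪ M2) (h : e.1 = b) : MReach M1 M2 b e
  | step (e f : ℕ × ℕ) (hr : MReach M1 M2 b e) (hf : f ∈ M1 ∪ M2)
      (hs : f.1 = e.1 ∨ f.2 = e.2) : MReach M1 M2 b f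

/-- Buyers anchored to `b` via a backward alternating path. -/
inductive GBuy (M1 M2 : Finset (ℕ × ℕ)) (b : ℕ) : ℕ → Prop
  | base : GBuy M1 M2 b b
  | step (f e : ℕ × ℕ) (hf : f ∈ M2) (he : e ∈ M1) (hs : e.2 = f.2)
      (h : GBuy M1 M2 b e.1) : GBuy M1 M2 b f.1

lemma gbuy_inv {M1 M2 : Finset (ℕ × ℕ)} {b x : ℕ} (h : GBuy M1 M2 b x) :
    x = b ∨ ∃ f, f ∈ M2 ∧ f.1 = x ∧ ∃ e, e ∈ M1 ∧ e.2 = f.2 ∧ GBuy M1 M2 b e.1 := by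
  cases h with
  | base => exact Or.inl rfl
  | step f e hf he hs hgb => exact Or.inr ⟨f, hf, rfl, e, he, hs, hgb⟩

lemma mreach_mem {M1 M2 : Finset (ℕ × ℕ)} {b : ℕ} {e : ℕ × ℕ}
    (h : MReach M1 M2 b e) : e ∈ M1 ∪ M2 := by
  cases h with
  | base e he _ => exact he
  | step e f _ hf _ => exact hf

lemma mreach_inv {M1 M2 : Finset (ℕ × ℕ)} {b : ℕ}
    (h1 : Dist M1) (h2 : Dist M2) (hb : ∀ e ∈ M2, e.1 ≠ b) :
    ∀ e : ℕ × ℕ, MReach M1 M2 b e →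
      (e ∈ M1 → GBuy M1 M2 b e.1) ∧
      (e ∈ M2 → ∃ e', e' ∈ M1 ∧ e'.2 = e.2 ∧ GBuy M1 M2 b e'.1) := by
  intro e h
  induction h with
  | base e he hbe =>
      constructor
      · intro _; rw [hbe]; exact GBuy.base
      · intro he2; exact absurd hbe (hb e he2)
  | step e f hr hf hs ih =>
      have hemem : e ∈ M1 ∪ M2 := mreach_mem hr
      constructor
      · -- f ∈ M1 → GBuy f.1
        intro hfM1
        by_cases heM1 : e ∈ M1
        · have hef : f = e := by
            rcases hs with h' | h'
            · exact h1.eq_fst hfM1 heM1 h'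
            · exact h1.eq_snd hfM1 heM1 h'
          rw [hef]; exact ih.1 heM1
        · have heM2 : e ∈ M2 := (Finset.mem_union.mp hemem).resolve_left heM1
          obtain ⟨e', he', hs', hgb⟩ := ih.2 heM2
          rcases hs with h' | h'
          · -- f.1 = e.1 : use GBuy.step with f := e
            have : GBuy M1 M2 b e.1 := GBuy.step e e' heM2 he' hs' hgb
            rw [h']; exact this
          · -- f.2 = e.2 : e' and f are both in M1 with same snd
            have : e' = f := h1.eq_snd he' hfM1 (by rw [hs', h'])
            rw [← this]; exact hgb
      · -- f ∈ M2 → ∃ e' ∈ M1 ...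
        intro hfM2
        by_cases heM2 : e ∈ M2
        · have hef : f = e := by
            rcases hs with h' | h'
            · exact h2.eq_fst hfM2 heM2 h'
            · exact h2.eq_snd hfM2 heM2 h'
          rw [hef]; exact ih.2 heM2
        · have heM1 : e ∈ M1 := (Finset.mem_union.mp hemem).resolve_right heM2
          rcases hs with h' | h'
          · -- f.1 = e.1
            have hgb := ih.1 heM1
            rcases gbuy_inv hgb with hb' | ⟨f0, hf0, hf01, e0, he0, he02, hgb0⟩
            · exact absurd (h'.trans hb') (hb f hfM2)
            · have : f0 = f := h2.eq_fst hf0 hfM2 (by rw [hf01, h'])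
              exact ⟨e0, he0, by rw [he02, this], hgb0⟩
          · -- f.2 = e.2
            exact ⟨e, heM1, h'.symm, ih.1 heM1⟩

/-- Core exchange lemma: given two matchings `M1`, `M2` where `M2` does not touch buyer
`b`, the union can be re-split into matchings `A1`, `A2` of the same total weight such
that `A1` avoids buyer `b`, sellers of `A1` are sellers of `M1`, and buyers of `A2` are
buyers of `M2` or `b`. -/
lemma core (v : ℕ → ℕ → ℝ) (M1 M2 : Finset (ℕ × ℕ)) (h1 : Dist M1) (h2 : Dist M2)
    (b : ℕ) (hb : ∀ e ∈ M2, e.1 ≠ b) :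
    ∃ A1 A2 : Finset (ℕ × ℕ),
      Dist A1 ∧ Dist A2 ∧
      (∀ e ∈ A1, e ∈ M1 ∪ M2) ∧ (∀ e ∈ A2, e ∈ M1 ∪ M2) ∧
      ((∑ e ∈ A1, v e.1 e.2) + ∑ e ∈ A2, v e.1 e.2
        = (∑ e ∈ M1, v e.1 e.2) + ∑ e ∈ M2, v e.1 e.2) ∧
      (∀ e ∈ A1, e.1 ≠ b) ∧
      (∀ e ∈ A1, ∃ e', e' ∈ M1 ∧ e'.2 = e.2) ∧
      (∀ e ∈ A2, e.1 = b ∨ ∃ e', e' ∈ M2 ∧ e'.1 = e.1) := by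
  classical
  set C := (M1 ∪ M2).filter (MReach M1 M2 b) with hC
  have memC : ∀ {p : ℕ × ℕ}, p ∈ C → MReach M1 M2 b p := fun hp => (Finset.mem_filter.mp hp).2
  have adj : ∀ p ∈ C, ∀ q ∈ M1 ∪ M2, (q.1 = p.1 ∨ q.2 = p.2) → q ∈ C := by
    intro p hp q hq hs
    exact Finset.mem_filter.mpr ⟨hq, MReach.step p q (memC hp) hq hs⟩
  refine ⟨(M1 \ C) ∪ (M2 ∩ C), (M2 \ C) ∪ (M1 ∩ C), ?_, ?_, ?_, ?_, ?_, ?_, ?_, ?_⟩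
  · -- Dist A1
    intro e he f hf hne
    rcases Finset.mem_union.mp he with he' | he' <;>
      rcases Finset.mem_union.mp hf with hf' | hf'
    · exact h1 e (Finset.mem_sdiff.mp he').1 f (Finset.mem_sdiff.mp hf').1 hne
    · constructor
      · intro hx
        exact (Finset.mem_sdiff.mp he').2
          (adj f (Finset.mem_inter.mp hf').2 e (Finset.mem_union_left _ (Finset.mem_sdiff.mp he').1) (Or.inl hx))
      · intro hx
        exact (Finset.mem_sdiff.mp he').2
          (adj f (Finset.mem_inter.mp hf').2 e (Finset.mem_union_left _ (Finset.mem_sdiff.mp he').1) (Or.inr hx))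
    · constructor
      · intro hx
        exact (Finset.mem_sdiff.mp hf').2
          (adj e (Finset.mem_inter.mp he').2 f (Finset.mem_union_left _ (Finset.mem_sdiff.mp hf').1) (Or.inl hx.symm))
      · intro hx
        exact (Finset.mem_sdiff.mp hf').2
          (adj e (Finset.mem_inter.mp he').2 f (Finset.mem_union_left _ (Finset.mem_sdiff.mp hf').1) (Or.inr hx.symm))
    · exact h2 e (Finset.mem_inter.mp he').1 f (Finset.mem_inter.mp hf').1 hne
  · -- Dist A2
    intro e he f hf hne
    rcases Finset.mem_union.mp he with he' | he' <;>
      rcases Finset.mem_union.mp hf with hf' | hf'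
    · exact h2 e (Finset.mem_sdiff.mp he').1 f (Finset.mem_sdiff.mp hf').1 hne
    · constructor
      · intro hx
        exact (Finset.mem_sdiff.mp he').2
          (adj f (Finset.mem_inter.mp hf').2 e (Finset.mem_union_right _ (Finset.mem_sdiff.mp he').1) (Or.inl hx))
      · intro hx
        exact (Finset.mem_sdiff.mp he').2
          (adj f (Finset.mem_inter.mp hf').2 e (Finset.mem_union_right _ (Finset.mem_sdiff.mp he').1) (Or.inr hx))
    · constructor
      · intro hx
        exact (Finset.mem_sdiff.mp hf').2
          (adj e (Finset.mem_inter.mp he').2 f (Finset.mem_union_right _ (Finset.mem_sdiff.mp hf').1) (Or.inl hx.symm))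
      · intro hx
        exact (Finset.mem_sdiff.mp hf').2
          (adj e (Finset.mem_inter.mp he').2 f (Finset.mem_union_right _ (Finset.mem_sdiff.mp hf').1) (Or.inr hx.symm))
    · exact h1 e (Finset.mem_inter.mp he').1 f (Finset.mem_inter.mp hf').1 hne
  · -- A1 ⊆ M1 ∪ M2
    intro e he
    rcases Finset.mem_union.mp he with he' | he'
    · exact Finset.mem_union_left _ (Finset.mem_sdiff.mp he').1
    · exact Finset.mem_union_right _ (Finset.mem_inter.mp he').1
  · -- A2 ⊆ M1 ∪ M2
    intro e he
    rcases Finset.mem_union.mp he with he' | he'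
    · exact Finset.mem_union_right _ (Finset.mem_sdiff.mp he').1
    · exact Finset.mem_union_left _ (Finset.mem_inter.mp he').1
  · -- weights
    have d1 : Disjoint (M1 \ C) (M2 ∩ C) := by
      rw [Finset.disjoint_left]
      intro a ha ha'
      exact (Finset.mem_sdiff.mp ha).2 (Finset.mem_inter.mp ha').2
    have d2 : Disjoint (M2 \ C) (M1 ∩ C) := by
      rw [Finset.disjoint_left]
      intro a ha ha'
      exact (Finset.mem_sdiff.mp ha).2 (Finset.mem_inter.mp ha').2
    rw [Finset.sum_union d1, Finset.sum_union d2]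
    have e1 : (∑ e ∈ M1 ∩ C, v e.1 e.2) + ∑ e ∈ M1 \ C, v e.1 e.2 = ∑ e ∈ M1, v e.1 e.2 :=
      Finset.sum_inter_add_sum_sdiff M1 C _
    have e2 : (∑ e ∈ M2 ∩ C, v e.1 e.2) + ∑ e ∈ M2 \ C, v e.1 e.2 = ∑ e ∈ M2, v e.1 e.2 :=
      Finset.sum_inter_add_sum_sdiff M2 C _
    linarith
  · -- A1 avoids buyer b
    intro e he
    rcases Finset.mem_union.mp he with he' | he'
    · intro hx
      exact (Finset.mem_sdiff.mp he').2
        (Finset.mem_filter.mpr ⟨Finset.mem_union_left _ (Finset.mem_sdiff.mp he').1,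
          MReach.base e (Finset.mem_union_left _ (Finset.mem_sdiff.mp he').1) hx⟩)
    · exact hb e (Finset.mem_inter.mp he').1
  · -- sellers of A1 are sellers of M1
    intro e he
    rcases Finset.mem_union.mp he with he' | he'
    · exact ⟨e, (Finset.mem_sdiff.mp he').1, rfl⟩
    · have hr := memC (Finset.mem_inter.mp he').2
      obtain ⟨e', he', hs', _⟩ := (mreach_inv h1 h2 hb e hr).2 (Finset.mem_inter.mp he').1
      exact ⟨e', he', hs'⟩
  · -- buyers of A2 are buyers of M2 or b
    intro e he
    rcases Finset.mem_union.mp he with he' | he'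
    · exact Or.inr ⟨e, (Finset.mem_sdiff.mp he').1, rfl⟩
    · have hr := memC (Finset.mem_inter.mp he').2
      have hgb := (mreach_inv h1 h2 hb e hr).1 (Finset.mem_inter.mp he').1
      rcases gbuy_inv hgb with h' | ⟨f0, hf0, hf01, _⟩
      · exact Or.inl h'
      · exact Or.inr ⟨f0, hf0, hf01⟩

/-! ### Exchange consequences -/

/-- Cross-monotonicity: the marginal loss from deleting seller `j` is larger when
buyer `i` is present. -/
lemma cross_mono (v : ℕ → ℕ → ℝ) (B S : Finset ℕ) (g0 : ℕ → ℕ → Prop) (i j : ℕ) :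
    W B (S.erase j) g0 v + W (B.erase i) S g0 v
      ≤ W B S g0 v + W (B.erase i) (S.erase j) g0 v := by
  obtain ⟨M1, hM1, hM1W⟩ := W_exists B (S.erase j) g0 v
  obtain ⟨M2, hM2, hM2W⟩ := W_exists (B.erase i) S g0 v
  have hb : ∀ e ∈ M2, e.1 ≠ i := fun e he =>
    Finset.ne_of_mem_erase ((hM2.1 e he).1)
  obtain ⟨A1, A2, hd1, hd2, hm1, hm2, hw, hnb, hsell, hbuy⟩ :=
    core v M1 M2 hM1.2 hM2.2 i hb
  have memB : ∀ e, e ∈ M1 ∪ M2 → e.1 ∈ B ∧ e.2 ∈ S ∧ g0 e.1 e.2 := by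
    intro e he
    rcases Finset.mem_union.mp he with h | h
    · obtain ⟨h1, h2, h3⟩ := hM1.1 e h
      exact ⟨h1, Finset.mem_of_mem_erase h2, h3⟩
    · obtain ⟨h1, h2, h3⟩ := hM2.1 e h
      exact ⟨Finset.mem_of_mem_erase h1, h2, h3⟩
  have hA1 : IsMatching (B.erase i) (S.erase j) g0 A1 := by
    constructor
    · intro e he
      obtain ⟨h1, h2, h3⟩ := memB e (hm1 e he)
      refine ⟨Finset.mem_erase.mpr ⟨hnb e he, h1⟩, ?_, h3⟩
      obtain ⟨e', he', hs'⟩ := hsell e he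
      rw [← hs']
      exact (hM1.1 e' he').2.1
    · exact hd1
  have hA2 : IsMatching B S g0 A2 := by
    constructor
    · intro e he
      exact memB e (hm2 e he)
    · exact hd2
  have l1 := le_W (v := v) hA1
  have l2 := le_W (v := v) hA2
  linarith

/-- Buyer-side submodularity (one step). -/
lemma buyer_submod (v : ℕ → ℕ → ℝ) (B S : Finset ℕ) (g0 : ℕ → ℕ → Prop) (i0 x : ℕ)
    (hi0 : i0 ∈ B) (hne : i0 ≠ x) :
    W B S g0 v + W ((B.erase x).erase i0) S g0 v
      ≤ W (B.erase i0) S g0 v + W (B.erase x) S g0 v := by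
  obtain ⟨M1, hM1, hM1W⟩ := W_exists B S g0 v
  obtain ⟨M2, hM2, hM2W⟩ := W_exists ((B.erase x).erase i0) S g0 v
  have hb : ∀ e ∈ M2, e.1 ≠ i0 := fun e he =>
    Finset.ne_of_mem_erase ((hM2.1 e he).1)
  obtain ⟨A1, A2, hd1, hd2, hm1, hm2, hw, hnb, hsell, hbuy⟩ :=
    core v M1 M2 hM1.2 hM2.2 i0 hb
  have memB : ∀ e, e ∈ M1 ∪ M2 → e.1 ∈ B ∧ e.2 ∈ S ∧ g0 e.1 e.2 := by
    intro e he
    rcases Finset.mem_union.mp he with h | h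
    · exact hM1.1 e h
    · obtain ⟨h1, h2, h3⟩ := hM2.1 e h
      exact ⟨Finset.mem_of_mem_erase (Finset.mem_of_mem_erase h1), h2, h3⟩
  have hA1 : IsMatching (B.erase i0) S g0 A1 := by
    constructor
    · intro e he
      obtain ⟨h1, h2, h3⟩ := memB e (hm1 e he)
      exact ⟨Finset.mem_erase.mpr ⟨hnb e he, h1⟩, h2, h3⟩
    · exact hd1
  have hA2 : IsMatching (B.erase x) S g0 A2 := by
    constructor
    · intro e he
      obtain ⟨h1, h2, h3⟩ := memB e (hm2 e he)
      refine ⟨?_, h2, h3⟩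
      rcases hbuy e he with h' | ⟨e', he', hs'⟩
      · rw [h']
        exact Finset.mem_erase.mpr ⟨hne, hi0⟩
      · rw [← hs']
        exact Finset.mem_of_mem_erase ((hM2.1 e' he').1)
    · exact hd2
  have l1 := le_W (v := v) hA1
  have l2 := le_W (v := v) hA2
  linarith

lemma sdiff_insert' (B T : Finset ℕ) (x : ℕ) : B \ insert x T = (B \ T).erase x := by
  ext a
  simp only [Finset.mem_sdiff, Finset.mem_insert, Finset.mem_erase]
  tauto

/-- Marginal contribution of a buyer only grows as other buyers are removed. -/
lemma marg_mono (v : ℕ → ℕ → ℝ) (B S : Finset ℕ) (g0 : ℕ → ℕ → Prop) (i0 : ℕ)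
    (hi0 : i0 ∈ B) :
    ∀ T : Finset ℕ, i0 ∉ T →
      W B S g0 v - W (B.erase i0) S g0 v
        ≤ W (B \ T) S g0 v - W ((B \ T).erase i0) S g0 v := by
  intro T
  induction T using Finset.induction with
  | empty => intro _; simp
  | @insert x T hx ih =>
      intro hmem
      have hne : i0 ≠ x := fun h => hmem (h ▸ Finset.mem_insert_self x T)
      have hT : i0 ∉ T := fun h => hmem (Finset.mem_insert_of_mem h)
      have hstep := buyer_submod v (B \ T) S g0 i0 x
        (Finset.mem_sdiff.mpr ⟨hi0, hT⟩) hne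
      rw [sdiff_insert']
      have := ih hT
      linarith

/-- Telescoping bound on the sum of buyers' marginal contributions. -/
lemma tele (v : ℕ → ℕ → ℝ) (B S : Finset ℕ) (g0 : ℕ → ℕ → Prop) :
    ∀ I : Finset ℕ, I ⊆ B →
      ∑ i ∈ I, (W B S g0 v - W (B.erase i) S g0 v)
        ≤ W B S g0 v - W (B \ I) S g0 v := by
  intro I
  induction I using Finset.induction with
  | empty => intro _; simp
  | @insert i0 I hi0 ih =>
      intro hsub
      have hi0B : i0 ∈ B := hsub (Finset.mem_insert_self i0 I)
      have hIB : I ⊆ B := fun a ha => hsub (Finset.mem_insert_of_mem ha)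
      rw [Finset.sum_insert hi0, sdiff_insert']
      have h1 := ih hIB
      have h2 := marg_mono v B S g0 i0 hi0B I hi0
      linarith

/-- Adding one available edge on fresh vertices to the optimum of the reduced market. -/
lemma insert_edge (v : ℕ → ℕ → ℝ) (B S : Finset ℕ) (g1 g0 : ℕ → ℕ → Prop) (i j : ℕ)
    (hi : i ∈ B) (hj : j ∈ S) (hg : g1 i j) (himp : ∀ a b, g0 a b → g1 a b) :
    v i j + W (B.erase i) (S.erase j) g0 v ≤ W B S g1 v := by
  obtain ⟨M', hM', hM'W⟩ := W_exists (B.erase i) (S.erase j) g0 v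
  have hnm : (i, j) ∉ M' := fun h => Finset.ne_of_mem_erase ((hM'.1 _ h).1) rfl
  have hmatch : IsMatching B S g1 (insert (i, j) M') := by
    constructor
    · intro e he
      rcases Finset.mem_insert.mp he with h | h
      · rw [h]; exact ⟨hi, hj, hg⟩
      · obtain ⟨h1, h2, h3⟩ := hM'.1 e h
        exact ⟨Finset.mem_of_mem_erase h1, Finset.mem_of_mem_erase h2, himp _ _ h3⟩
    · intro e he f hf hne
      rcases Finset.mem_insert.mp he with h | h <;> rcases Finset.mem_insert.mp hf with h' | h'
      · exact absurd (h.trans h'.symm) hne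
      · obtain ⟨h1, h2, _⟩ := hM'.1 f h'
        rw [h]
        exact ⟨fun hh => Finset.ne_of_mem_erase h1 hh.symm,
          fun hh => Finset.ne_of_mem_erase h2 hh.symm⟩
      · obtain ⟨h1, h2, _⟩ := hM'.1 e h
        rw [h']
        exact ⟨Finset.ne_of_mem_erase h1, Finset.ne_of_mem_erase h2⟩
      · exact hM'.2 e h f h' hne
  have := le_W (v := v) hmatch
  rw [Finset.sum_insert hnm] at this
  linarith

/-- Removing seller `j` from the market makes the extra platform membership of `j`
irrelevant. -/
lemma W_erase_gPlat (v : ℕ → ℕ → ℝ) (B S : Finset ℕ) (g : ℕ → ℕ → Prop) (P : Finset ℕ)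
    (j : ℕ) :
    W B (S.erase j) (gPlat g (insert j P)) v = W B (S.erase j) (gPlat g P) v := by
  apply le_antisymm
  · apply W_mono
    intro M hM
    constructor
    · intro e he
      obtain ⟨h1, h2, h3⟩ := hM.1 e he
      refine ⟨h1, h2, ?_⟩
      rcases h3 with h | h
      · exact Or.inl h
      · rcases Finset.mem_insert.mp h with h' | h'
        · exact absurd h' (Finset.ne_of_mem_erase h2)
        · exact Or.inr h'
    · exact hM.2
  · apply W_mono
    intro M hM
    constructor
    · intro e he
      obtain ⟨h1, h2, h3⟩ := hM.1 e he
      refine ⟨h1, h2, ?_⟩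
      rcases h3 with h | h
      · exact Or.inl h
      · exact Or.inr (Finset.mem_insert_of_mem h)
    · exact hM.2

end PlatformPoA

/-- Price of Anarchy of pure Platform Equilibria at fee `α ∈ [0,1)`: the social welfare in
any pure Platform Equilibrium `P` is at least a `(1−α)/(2−α)`-fraction of the unconstrained
optimal welfare. -/
theorem pure_poa (B S : Finset ℕ) (g : ℕ → ℕ → Prop) (v : ℕ → ℕ → ℝ)
    (hv : ∀ i j, 0 ≤ v i j) (α : ℝ) (hα0 : 0 ≤ α) (hα1 : α < 1)
    (P : Finset ℕ) (hPE : IsPE B S g v α P) :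
    ((1 - α) / (2 - α)) * W B S (fun _ _ => True) v ≤ W B S (gPlat g P) v := by
  classical
  obtain ⟨hPS, hP1, hP2⟩ := hPE
  obtain ⟨F, hF, hFW⟩ := PlatformPoA.W_exists B S (fun _ _ => True) v
  obtain ⟨N, hN, hNW⟩ := PlatformPoA.W_exists B S (gPlat g P) v
  set GP := gPlat g P with hGPdef
  set WP := W B S GP v with hWPdef
  set Fh := F.filter (fun e => ¬ (g e.1 e.2 ∨ e.2 ∈ P)) with hFhdef
  set Fe := F.filter (fun e => (g e.1 e.2 ∨ e.2 ∈ P)) with hFedef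
  set I := Fh.image Prod.fst with hIdef
  have hFhF : ∀ e ∈ Fh, e ∈ F := fun e he => Finset.mem_of_mem_filter e he
  have hFeF : ∀ e ∈ Fe, e ∈ F := fun e he => Finset.mem_of_mem_filter e he
  -- Step 1: per-edge bound for hard edges
  have step1 : ∀ e ∈ Fh, v e.1 e.2 ≤ price B S g v (insert e.2 P) e.2
      + (WP - W (B.erase e.1) S GP v) := by
    intro e he
    have heF := hFhF e he
    have he1B : e.1 ∈ B := (hF.1 e heF).1
    have he2S : e.2 ∈ S := (hF.1 e heF).2.1
    have hins : v e.1 e.2 + W (B.erase e.1) (S.erase e.2) GP v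
        ≤ W B S (gPlat g (insert e.2 P)) v := by
      apply PlatformPoA.insert_edge v B S (gPlat g (insert e.2 P)) GP e.1 e.2 he1B he2S
      · exact Or.inr (Finset.mem_insert_self _ _)
      · intro a b hab
        rcases hab with h | h
        · exact Or.inl h
        · exact Or.inr (Finset.mem_insert_of_mem h)
    have hcongr : W B (S.erase e.2) (gPlat g (insert e.2 P)) v
        = W B (S.erase e.2) GP v := PlatformPoA.W_erase_gPlat v B S g P e.2
    have hx := PlatformPoA.cross_mono v B S GP e.1 e.2
    have hpr : price B S g v (insert e.2 P) e.2
        = W B S (gPlat g (insert e.2 P)) v - W B (S.erase e.2) GP v := by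
      rw [price, hcongr]
    rw [hpr]
    linarith
  -- Step 2: the sum over hard edges of buyer marginals telescopes
  have hinj1 : ∀ x ∈ Fh, ∀ y ∈ Fh, x.1 = y.1 → x = y := by
    intro x hx y hy hxy
    by_contra hne
    exact (hF.2 x (hFhF x hx) y (hFhF y hy) hne).1 hxy
  have hIB : I ⊆ B := by
    intro i hi
    obtain ⟨e, he, rfl⟩ := Finset.mem_image.mp hi
    exact (hF.1 e (hFhF e he)).1
  have htele : ∑ e ∈ Fh, (WP - W (B.erase e.1) S GP v)
      ≤ WP - W (B \ I) S GP v := by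
    have h1 : ∑ e ∈ Fh, (WP - W (B.erase e.1) S GP v)
        = ∑ i ∈ I, (WP - W (B.erase i) S GP v) :=
      (Finset.sum_image (f := fun i => WP - W (B.erase i) S GP v) hinj1).symm
    rw [h1]
    exact PlatformPoA.tele v B S GP I hIB
  -- Step 3: easy edges fit in the market without the hard buyers
  have heasy : ∑ e ∈ Fe, v e.1 e.2 ≤ W (B \ I) S GP v := by
    apply PlatformPoA.le_W
    constructor
    · intro e he
      have heF := hFeF e he
      refine ⟨Finset.mem_sdiff.mpr ⟨(hF.1 e heF).1, ?_⟩, (hF.1 e heF).2.1, ?_⟩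
      · intro hmem
        obtain ⟨f, hf, hf1⟩ := Finset.mem_image.mp hmem
        have : f = e := by
          by_contra hne
          exact (hF.2 f (hFhF f hf) e heF hne).1 hf1
        rw [this] at hf
        exact (Finset.mem_filter.mp hf).2 (Finset.mem_filter.mp he).2
      · exact (Finset.mem_filter.mp he).2
    · intro e he f hf hne
      exact hF.2 e (hFeF e he) f (hFeF f hf) hne
  -- Step 4: main welfare bound
  have hsplit : (∑ e ∈ Fe, v e.1 e.2) + ∑ e ∈ Fh, v e.1 e.2 = ∑ e ∈ F, v e.1 e.2 := by
    rw [hFedef, hFhdef]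
    exact Finset.sum_filter_add_sum_filter_not F _ _
  have hsum1 : ∑ e ∈ Fh, v e.1 e.2
      ≤ (∑ e ∈ Fh, price B S g v (insert e.2 P) e.2)
        + ∑ e ∈ Fh, (WP - W (B.erase e.1) S GP v) := by
    rw [← Finset.sum_add_distrib]
    exact Finset.sum_le_sum step1
  have key : W B S (fun _ _ => True) v
      ≤ WP + ∑ e ∈ Fh, price B S g v (insert e.2 P) e.2 := by
    rw [hFW, ← hsplit]
    linarith
  -- Step 5: sum of current prices of hard sellers is at most WP
  have hpriceP : ∀ j : ℕ, price B S g v P j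
      ≤ ∑ e ∈ N.filter (fun e => e.2 = j), v e.1 e.2 := by
    intro j
    have hmatch : IsMatching B (S.erase j) GP (N.filter (fun e => ¬ e.2 = j)) := by
      constructor
      · intro e he
        obtain ⟨h1, h2, h3⟩ := hN.1 e (Finset.mem_of_mem_filter e he)
        exact ⟨h1, Finset.mem_erase.mpr ⟨(Finset.mem_filter.mp he).2, h2⟩, h3⟩
      · intro e he f hf hne
        exact hN.2 e (Finset.mem_of_mem_filter e he) f (Finset.mem_of_mem_filter f hf) hne
    have hle := PlatformPoA.le_W (v := v) hmatch
    have hsum : (∑ e ∈ N.filter (fun e => e.2 = j), v e.1 e.2)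
        + ∑ e ∈ N.filter (fun e => ¬ e.2 = j), v e.1 e.2 = ∑ e ∈ N, v e.1 e.2 :=
      Finset.sum_filter_add_sum_filter_not N _ _
    have : price B S g v P j = WP - W B (S.erase j) GP v := rfl
    rw [this, hNW.symm] at *
    linarith
  have hinj2 : ∀ x ∈ Fh, ∀ y ∈ Fh, x.2 = y.2 → x = y := by
    intro x hx y hy hxy
    by_contra hne
    exact (hF.2 x (hFhF x hx) y (hFhF y hy) hne).2 hxy
  set J := Fh.image Prod.snd with hJdef
  have hsumP : ∑ e ∈ Fh, price B S g v P e.2 ≤ WP := by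
    have h1 : ∑ e ∈ Fh, price B S g v P e.2 = ∑ j ∈ J, price B S g v P j :=
      (Finset.sum_image (f := price B S g v P) hinj2).symm
    have h2 : ∑ j ∈ J, price B S g v P j
        ≤ ∑ j ∈ J, ∑ e ∈ N.filter (fun e => e.2 = j), v e.1 e.2 :=
      Finset.sum_le_sum fun j _ => hpriceP j
    have hdisj : ∀ x ∈ J, ∀ y ∈ J, x ≠ y →
        Disjoint (N.filter (fun e => e.2 = x)) (N.filter (fun e => e.2 = y)) := by
      intro x _ y _ hxy
      rw [Finset.disjoint_left]
      intro a ha ha'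
      exact hxy ((Finset.mem_filter.mp ha).2.symm.trans (Finset.mem_filter.mp ha').2)
    have h3 : ∑ j ∈ J, ∑ e ∈ N.filter (fun e => e.2 = j), v e.1 e.2
        = ∑ e ∈ J.biUnion (fun j => N.filter (fun e => e.2 = j)), v e.1 e.2 :=
      (Finset.sum_biUnion hdisj).symm
    have h4 : J.biUnion (fun j => N.filter (fun e => e.2 = j)) ⊆ N := by
      intro e he
      obtain ⟨j, _, he'⟩ := Finset.mem_biUnion.mp he
      exact Finset.mem_of_mem_filter e he'
    have h5 : ∑ e ∈ J.biUnion (fun j => N.filter (fun e => e.2 = j)), v e.1 e.2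
        ≤ ∑ e ∈ N, v e.1 e.2 :=
      Finset.sum_le_sum_of_subset_of_nonneg h4 (fun e _ _ => hv e.1 e.2)
    rw [h1]
    calc ∑ j ∈ J, price B S g v P j
        ≤ ∑ e ∈ J.biUnion (fun j => N.filter (fun e => e.2 = j)), v e.1 e.2 := by
          rw [← h3]; exact h2
      _ ≤ ∑ e ∈ N, v e.1 e.2 := h5
      _ = WP := hNW.symm
  -- Step 6: equilibrium condition
  have heq : ∀ e ∈ Fh, (1 - α) * price B S g v (insert e.2 P) e.2
      ≤ price B S g v P e.2 := by
    intro e he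
    have he2S : e.2 ∈ S := (hF.1 e (hFhF e he)).2.1
    have hnP : e.2 ∉ P := fun h => (Finset.mem_filter.mp he).2 (Or.inr h)
    exact hP2 e.2 he2S hnP
  have hfee : (1 - α) * ∑ e ∈ Fh, price B S g v (insert e.2 P) e.2 ≤ WP := by
    rw [Finset.mul_sum]
    exact le_trans (Finset.sum_le_sum heq) hsumP
  -- Final algebra
  have h1α : (0 : ℝ) < 1 - α := by linarith
  have h2α : (0 : ℝ) < 2 - α := by linarith
  rw [div_mul_eq_mul_div, div_le_iff₀ h2α]
  have hmul := mul_le_mul_of_nonneg_left key (le_of_lt h1α)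
  nlinarith [hmul, hfee]
end

section
/- In markets with seller production costs, if no seller joins the platform is a Platform Equilibrium at fee α ∈ [0,1) and β = (Σ_j c_j)/W* is the ratio of total cost to optimal welfare, then the equilibrium welfare satisfies W(S,B,v,c,G) ≥ ((1−α−αβ)/(2−α))·W*. -/
open Finset

/-- `Wc B S g v c` is the maximum total welfare (value minus production cost) of a
matching between buyers `B` and sellers `S` along edges of `g`. -/
noncomputable def Wc (B S : Finset ℕ) (g : ℕ → ℕ → Prop) (v : ℕ → ℕ → ℝ) (c : ℕ → ℝ) : ℝ :=
  sSup {x | ∃ M : Finset (ℕ × ℕ), IsMatching B S g M ∧ x = ∑ e ∈ M, (v e.1 e.2 - c e.2)}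



lemma matching_subset {B S : Finset ℕ} {g : ℕ → ℕ → Prop} {M M' : Finset (ℕ × ℕ)}
    (h : IsMatching B S g M) (hs : M' ⊆ M) : IsMatching B S g M' :=
  ⟨fun e he => h.1 e (hs he), fun e he e' he' => h.2 e (hs he) e' (hs he')⟩

lemma matching_mono {B B' S S' : Finset ℕ} {g g' : ℕ → ℕ → Prop} {M : Finset (ℕ × ℕ)}
    (hB : B ⊆ B') (hS : S ⊆ S') (hg : ∀ a b, g a b → g' a b)
    (h : IsMatching B S g M) : IsMatching B' S' g' M :=
  ⟨fun e he => ⟨hB (h.1 e he).1, hS (h.1 e he).2.1, hg _ _ (h.1 e he).2.2⟩, h.2⟩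

lemma wcset_finite (B S : Finset ℕ) (g : ℕ → ℕ → Prop) (v : ℕ → ℕ → ℝ) (c : ℕ → ℝ) :
    {x | ∃ M : Finset (ℕ × ℕ), IsMatching B S g M ∧ x = ∑ e ∈ M, (v e.1 e.2 - c e.2)}.Finite := by
  apply Set.Finite.subset (Set.Finite.image (fun M : Finset (ℕ × ℕ) => ∑ e ∈ M, (v e.1 e.2 - c e.2)) ((B ×ˢ S).powerset : Finset (Finset (ℕ × ℕ))).finite_toSet)
  rintro x ⟨M, hM, rfl⟩
  refine ⟨M, ?_, rfl⟩
  simp only [Finset.coe_powerset, Set.mem_preimage, Set.mem_powerset_iff, Finset.coe_subset, Finset.mem_coe, Finset.mem_powerset]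
  intro e he
  exact Finset.mem_product.2 ⟨(hM.1 e he).1, (hM.1 e he).2.1⟩

lemma wcset_nonempty (B S : Finset ℕ) (g : ℕ → ℕ → Prop) (v : ℕ → ℕ → ℝ) (c : ℕ → ℝ) :
    {x | ∃ M : Finset (ℕ × ℕ), IsMatching B S g M ∧ x = ∑ e ∈ M, (v e.1 e.2 - c e.2)}.Nonempty :=
  ⟨0, ∅, ⟨fun e he => absurd he (by simp), fun e he => absurd he (by simp)⟩, by simp⟩

lemma le_Wc {B S : Finset ℕ} {g : ℕ → ℕ → Prop} {v : ℕ → ℕ → ℝ} {c : ℕ → ℝ}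
    {M : Finset (ℕ × ℕ)} (h : IsMatching B S g M) :
    ∑ e ∈ M, (v e.1 e.2 - c e.2) ≤ Wc B S g v c :=
  le_csSup (Set.Finite.bddAbove (wcset_finite B S g v c)) ⟨M, h, rfl⟩

lemma Wc_nonneg (B S : Finset ℕ) (g : ℕ → ℕ → Prop) (v : ℕ → ℕ → ℝ) (c : ℕ → ℝ) :
    0 ≤ Wc B S g v c := by
  have := le_Wc (B := B) (S := S) (g := g) (v := v) (c := c) (M := ∅)
    ⟨fun e he => absurd he (by simp), fun e he => absurd he (by simp)⟩
  simpa using this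

lemma exists_opt (B S : Finset ℕ) (g : ℕ → ℕ → Prop) (v : ℕ → ℕ → ℝ) (c : ℕ → ℝ) :
    ∃ M : Finset (ℕ × ℕ), IsMatching B S g M ∧ Wc B S g v c = ∑ e ∈ M, (v e.1 e.2 - c e.2) ∧
      ∀ e ∈ M, 0 ≤ v e.1 e.2 - c e.2 := by
  obtain ⟨M, hM, hsum⟩ := Set.Nonempty.csSup_mem (wcset_nonempty B S g v c) (wcset_finite B S g v c)
  set M' := M.filter (fun e => 0 ≤ v e.1 e.2 - c e.2) with hM'
  refine ⟨M', matching_subset hM (Finset.filter_subset _ _), le_antisymm ?_ (le_Wc (matching_subset hM (Finset.filter_subset _ _))), fun e he => (Finset.mem_filter.1 he).2⟩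
  calc Wc B S g v c = ∑ e ∈ M, (v e.1 e.2 - c e.2) := hsum
    _ ≤ ∑ e ∈ M', (v e.1 e.2 - c e.2) := by
        rw [← Finset.sum_filter_add_sum_filter_not M (fun e => 0 ≤ v e.1 e.2 - c e.2)]
        have : ∑ e ∈ M.filter (fun e => ¬ 0 ≤ v e.1 e.2 - c e.2), (v e.1 e.2 - c e.2) ≤ 0 :=
          Finset.sum_nonpos (fun e he => le_of_lt (not_le.1 (Finset.mem_filter.1 he).2))
        linarith

lemma lemG (g : ℕ → ℕ → Prop) (j : ℕ) (w : ℕ → ℕ → ℝ) (B S : Finset ℕ) :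
    ∀ (n : ℕ) (Q P : Finset (ℕ × ℕ)) (x y : ℕ), Q.card ≤ n →
    IsMatching B S g P → IsMatching B S g Q → x ∈ B → y ∈ S → (g x y ∨ y = j) →
    (∀ e ∈ Q, e.1 ≠ x) → (∀ e ∈ P, e.2 ≠ y) →
    ∃ M1 M2 : Finset (ℕ × ℕ),
      IsMatching B S (fun a b => g a b ∨ b = j) M1 ∧ IsMatching B S g M2 ∧
      (∀ e ∈ M1, e.1 = x ∨ ∃ f ∈ Q, e.1 = f.1) ∧
      (∀ e ∈ M1, e.2 = y ∨ (∃ f ∈ Q, e.2 = f.2) ∨ (∃ f ∈ P, e.2 = f.2)) ∧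
      (∀ e ∈ M2, (∃ f ∈ P, e.1 = f.1) ∨ ∃ f ∈ Q, e.1 = f.1) ∧
      (∀ e ∈ M2, (∃ f ∈ P, e.2 = f.2) ∨ ∃ f ∈ Q, e.2 = f.2) ∧
      ∑ e ∈ M1, w e.1 e.2 + ∑ e ∈ M2, w e.1 e.2
        = w x y + ∑ e ∈ P, w e.1 e.2 + ∑ e ∈ Q, w e.1 e.2 := by
  intro n
  induction n with
  | zero =>
    intro Q P x y hcard hP hQ hx hy hxy hQx hPy
    -- Q is empty
    have hQe : Q = ∅ := Finset.card_eq_zero.1 (Nat.le_zero.1 hcard)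
    subst hQe
    refine ⟨insert (x, y) ∅, P, ?_, hP, ?_, ?_, ?_, ?_, ?_⟩
    · constructor
      · intro e he
        simp only [Finset.mem_insert, Finset.notMem_empty, or_false] at he
        subst he; exact ⟨hx, hy, hxy⟩
      · intro e he e' he' hne
        simp only [Finset.mem_insert, Finset.notMem_empty, or_false] at he he'
        subst he; subst he'; exact absurd rfl hne
    · intro e he
      simp only [Finset.mem_insert, Finset.notMem_empty, or_false] at he
      subst he; exact Or.inl rfl
    · intro e he
      simp only [Finset.mem_insert, Finset.notMem_empty, or_false] at he
      subst he; exact Or.inl rfl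
    · intro e he; exact Or.inl ⟨e, he, rfl⟩
    · intro e he; exact Or.inl ⟨e, he, rfl⟩
    · simp
  | succ n ih =>
    intro Q P x y hcard hP hQ hx hy hxy hQx hPy
    by_cases hym : ∃ e ∈ Q, e.2 = y
    · obtain ⟨e0, he0Q, he0y⟩ := hym
      have hbx : e0.1 ≠ x := hQx e0 he0Q
      have hbB : e0.1 ∈ B := (hQ.1 e0 he0Q).1
      have hgby : g e0.1 y := by rw [← he0y]; exact (hQ.1 e0 he0Q).2.2
      -- Q' = Q.erase e0
      have hQ' : IsMatching B S g (Q.erase e0) := matching_subset hQ (Finset.erase_subset _ _)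
      have hQ'b : ∀ e ∈ Q.erase e0, e.1 ≠ e0.1 := by
        intro e he
        exact (hQ.2 e (Finset.mem_of_mem_erase he) e0 he0Q (Finset.ne_of_mem_erase he)).1
      have hQ'y : ∀ e ∈ Q.erase e0, e.2 ≠ y := by
        intro e he
        rw [← he0y]
        exact (hQ.2 e (Finset.mem_of_mem_erase he) e0 he0Q (Finset.ne_of_mem_erase he)).2
      have hcard' : (Q.erase e0).card ≤ n := by
        have := Finset.card_erase_of_mem he0Q
        omega
      have hsumQ' : ∑ e ∈ Q.erase e0, w e.1 e.2 = ∑ e ∈ Q, w e.1 e.2 - w e0.1 y := by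
        rw [← Finset.sum_erase_add Q _ he0Q, he0y]; ring
      by_cases hbm : ∃ f ∈ P, f.1 = e0.1
      · -- recursive case
        obtain ⟨f0, hf0P, hf0b⟩ := hbm
        have hsS : f0.2 ∈ S := (hP.1 f0 hf0P).2.1
        have hgbs : g e0.1 f0.2 := by rw [← hf0b]; exact (hP.1 f0 hf0P).2.2
        have hsy : f0.2 ≠ y := hPy f0 hf0P
        have hP' : IsMatching B S g (P.erase f0) := matching_subset hP (Finset.erase_subset _ _)
        have hP's : ∀ e ∈ P.erase f0, e.2 ≠ f0.2 := by
          intro e he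
          exact (hP.2 e (Finset.mem_of_mem_erase he) f0 hf0P (Finset.ne_of_mem_erase he)).2
        have hP'b : ∀ e ∈ P.erase f0, e.1 ≠ e0.1 := by
          intro e he
          rw [← hf0b]
          exact (hP.2 e (Finset.mem_of_mem_erase he) f0 hf0P (Finset.ne_of_mem_erase he)).1
        have hP'y : ∀ e ∈ P.erase f0, e.2 ≠ y := fun e he => hPy e (Finset.mem_of_mem_erase he)
        obtain ⟨M1, M2, hM1, hM2, hM1b, hM1s, hM2b, hM2s, hsum⟩ :=
          ih (Q.erase e0) (P.erase f0) e0.1 f0.2 hcard' hP' hQ' hbB hsS (Or.inl hgbs) hQ'b hP's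
        -- x ∉ buyers M1, y ∉ sellers M1
        have hxM1 : ∀ e ∈ M1, e.1 ≠ x := by
          intro e he
          rcases hM1b e he with h | ⟨f, hf, hef⟩
          · rw [h]; exact hbx
          · rw [hef]; exact hQx f (Finset.mem_of_mem_erase hf)
        have hyM1 : ∀ e ∈ M1, e.2 ≠ y := by
          intro e he
          rcases hM1s e he with h | ⟨f, hf, hef⟩ | ⟨f, hf, hef⟩
          · rw [h]; exact hsy
          · rw [hef]; exact hQ'y f hf
          · rw [hef]; exact hPy f (Finset.mem_of_mem_erase hf)
        have hbM2 : ∀ e ∈ M2, e.1 ≠ e0.1 := by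
          intro e he
          rcases hM2b e he with ⟨f, hf, hef⟩ | ⟨f, hf, hef⟩
          · rw [hef]; exact hP'b f hf
          · rw [hef]; exact hQ'b f hf
        have hyM2 : ∀ e ∈ M2, e.2 ≠ y := by
          intro e he
          rcases hM2s e he with ⟨f, hf, hef⟩ | ⟨f, hf, hef⟩
          · rw [hef]; exact hP'y f hf
          · rw [hef]; exact hQ'y f hf
        have hxyM1 : (x, y) ∉ M1 := fun h => hxM1 _ h rfl
        have hbyM2 : (e0.1, y) ∉ M2 := fun h => hbM2 _ h rfl
        refine ⟨insert (x, y) M1, insert (e0.1, y) M2, ?_, ?_, ?_, ?_, ?_, ?_, ?_⟩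
        · constructor
          · intro e he
            rcases Finset.mem_insert.1 he with rfl | he
            · exact ⟨hx, hy, hxy⟩
            · exact hM1.1 e he
          · intro e he e' he' hne
            rcases Finset.mem_insert.1 he with rfl | he <;>
              rcases Finset.mem_insert.1 he' with rfl | he'
            · exact absurd rfl hne
            · exact ⟨fun h => hxM1 e' he' h.symm, fun h => hyM1 e' he' h.symm⟩
            · exact ⟨hxM1 e he, hyM1 e he⟩
            · exact hM1.2 e he e' he' hne
        · constructor
          · intro e he
            rcases Finset.mem_insert.1 he with rfl | he
            · exact ⟨hbB, hy, hgby⟩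
            · exact hM2.1 e he
          · intro e he e' he' hne
            rcases Finset.mem_insert.1 he with rfl | he <;>
              rcases Finset.mem_insert.1 he' with rfl | he'
            · exact absurd rfl hne
            · exact ⟨fun h => hbM2 e' he' h.symm, fun h => hyM2 e' he' h.symm⟩
            · exact ⟨hbM2 e he, hyM2 e he⟩
            · exact hM2.2 e he e' he' hne
        · intro e he
          rcases Finset.mem_insert.1 he with rfl | he
          · exact Or.inl rfl
          · rcases hM1b e he with h | ⟨f, hf, hef⟩
            · exact Or.inr ⟨e0, he0Q, h⟩
            · exact Or.inr ⟨f, Finset.mem_of_mem_erase hf, hef⟩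
        · intro e he
          rcases Finset.mem_insert.1 he with rfl | he
          · exact Or.inl rfl
          · rcases hM1s e he with h | ⟨f, hf, hef⟩ | ⟨f, hf, hef⟩
            · exact Or.inr (Or.inr ⟨f0, hf0P, h⟩)
            · exact Or.inr (Or.inl ⟨f, Finset.mem_of_mem_erase hf, hef⟩)
            · exact Or.inr (Or.inr ⟨f, Finset.mem_of_mem_erase hf, hef⟩)
        · intro e he
          rcases Finset.mem_insert.1 he with rfl | he
          · exact Or.inr ⟨e0, he0Q, rfl⟩
          · rcases hM2b e he with ⟨f, hf, hef⟩ | ⟨f, hf, hef⟩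
            · exact Or.inl ⟨f, Finset.mem_of_mem_erase hf, hef⟩
            · exact Or.inr ⟨f, Finset.mem_of_mem_erase hf, hef⟩
        · intro e he
          rcases Finset.mem_insert.1 he with rfl | he
          · exact Or.inr ⟨e0, he0Q, he0y.symm⟩
          · rcases hM2s e he with ⟨f, hf, hef⟩ | ⟨f, hf, hef⟩
            · exact Or.inl ⟨f, Finset.mem_of_mem_erase hf, hef⟩
            · exact Or.inr ⟨f, Finset.mem_of_mem_erase hf, hef⟩
        · rw [Finset.sum_insert hxyM1, Finset.sum_insert hbyM2]
          have hsumP' : ∑ e ∈ P.erase f0, w e.1 e.2 = ∑ e ∈ P, w e.1 e.2 - w e0.1 f0.2 := by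
            rw [← Finset.sum_erase_add P _ hf0P, hf0b]; ring
          rw [hsumP', hsumQ'] at hsum
          show w x y + ∑ e ∈ M1, w e.1 e.2 + (w e0.1 y + ∑ e ∈ M2, w e.1 e.2)
            = w x y + ∑ e ∈ P, w e.1 e.2 + ∑ e ∈ Q, w e.1 e.2
          linarith
      · -- base case 2 : e0.1 unmatched in P
        push_neg at hbm
        have hxyQ' : (x, y) ∉ Q.erase e0 := fun h => hQx _ (Finset.mem_of_mem_erase h) rfl
        have he0P : (e0.1, y) ∉ P := fun h => hbm _ h rfl
        refine ⟨insert (x, y) (Q.erase e0), insert (e0.1, y) P, ?_, ?_, ?_, ?_, ?_, ?_, ?_⟩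
        · constructor
          · intro e he
            rcases Finset.mem_insert.1 he with rfl | he
            · exact ⟨hx, hy, hxy⟩
            · obtain ⟨h1, h2, h3⟩ := hQ'.1 e he
              exact ⟨h1, h2, Or.inl h3⟩
          · intro e he e' he' hne
            rcases Finset.mem_insert.1 he with rfl | he <;>
              rcases Finset.mem_insert.1 he' with rfl | he'
            · exact absurd rfl hne
            · exact ⟨fun h => hQx e' (Finset.mem_of_mem_erase he') h.symm,
                fun h => hQ'y e' he' h.symm⟩
            · exact ⟨hQx e (Finset.mem_of_mem_erase he), hQ'y e he⟩
            · exact hQ'.2 e he e' he' hne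
        · constructor
          · intro e he
            rcases Finset.mem_insert.1 he with rfl | he
            · exact ⟨hbB, hy, hgby⟩
            · exact hP.1 e he
          · intro e he e' he' hne
            rcases Finset.mem_insert.1 he with rfl | he <;>
              rcases Finset.mem_insert.1 he' with rfl | he'
            · exact absurd rfl hne
            · exact ⟨fun h => hbm e' he' h.symm, fun h => hPy e' he' h.symm⟩
            · exact ⟨fun h => hbm e he h, fun h => hPy e he h⟩
            · exact hP.2 e he e' he' hne
        · intro e he
          rcases Finset.mem_insert.1 he with rfl | he
          · exact Or.inl rfl
          · exact Or.inr ⟨e, Finset.mem_of_mem_erase he, rfl⟩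
        · intro e he
          rcases Finset.mem_insert.1 he with rfl | he
          · exact Or.inl rfl
          · exact Or.inr (Or.inl ⟨e, Finset.mem_of_mem_erase he, rfl⟩)
        · intro e he
          rcases Finset.mem_insert.1 he with rfl | he
          · exact Or.inr ⟨e0, he0Q, rfl⟩
          · exact Or.inl ⟨e, he, rfl⟩
        · intro e he
          rcases Finset.mem_insert.1 he with rfl | he
          · exact Or.inr ⟨e0, he0Q, he0y.symm⟩
          · exact Or.inl ⟨e, he, rfl⟩
        · rw [Finset.sum_insert hxyQ', Finset.sum_insert he0P, hsumQ']
          show w x y + (∑ e ∈ Q, w e.1 e.2 - w e0.1 y) + (w e0.1 y + ∑ e ∈ P, w e.1 e.2)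
            = w x y + ∑ e ∈ P, w e.1 e.2 + ∑ e ∈ Q, w e.1 e.2
          ring
    · -- y unmatched in Q
      push_neg at hym
      have hxyQ : (x, y) ∉ Q := fun h => hym _ h rfl
      refine ⟨insert (x, y) Q, P, ?_, hP, ?_, ?_, ?_, ?_, ?_⟩
      · constructor
        · intro e he
          rcases Finset.mem_insert.1 he with rfl | he
          · exact ⟨hx, hy, hxy⟩
          · obtain ⟨h1, h2, h3⟩ := hQ.1 e he
            exact ⟨h1, h2, Or.inl h3⟩
        · intro e he e' he' hne
          rcases Finset.mem_insert.1 he with rfl | he <;>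
            rcases Finset.mem_insert.1 he' with rfl | he'
          · exact absurd rfl hne
          · exact ⟨fun h => hQx e' he' h.symm, fun h => hym e' he' h.symm⟩
          · exact ⟨hQx e he, hym e he⟩
          · exact hQ.2 e he e' he' hne
      · intro e he
        rcases Finset.mem_insert.1 he with rfl | he
        · exact Or.inl rfl
        · exact Or.inr ⟨e, he, rfl⟩
      · intro e he
        rcases Finset.mem_insert.1 he with rfl | he
        · exact Or.inl rfl
        · exact Or.inr (Or.inl ⟨e, he, rfl⟩)
      · intro e he; exact Or.inl ⟨e, he, rfl⟩
      · intro e he; exact Or.inl ⟨e, he, rfl⟩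
      · rw [Finset.sum_insert hxyQ]
        show w x y + ∑ e ∈ Q, w e.1 e.2 + ∑ e ∈ P, w e.1 e.2
          = w x y + ∑ e ∈ P, w e.1 e.2 + ∑ e ∈ Q, w e.1 e.2
        ring

lemma key_exchange (B S : Finset ℕ) (g : ℕ → ℕ → Prop) (v : ℕ → ℕ → ℝ) (c : ℕ → ℝ)
    (i j : ℕ) (hi : i ∈ B) (hj : j ∈ S) :
    (v i j - c j) + Wc B (S.erase j) g v c + Wc (B.erase i) S g v c
      ≤ Wc B S (fun a b => g a b ∨ b = j) v c + Wc B S g v c := by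
  obtain ⟨P, hP, hPval, -⟩ := exists_opt B (S.erase j) g v c
  obtain ⟨Q, hQ, hQval, -⟩ := exists_opt (B.erase i) S g v c
  have hPy : ∀ e ∈ P, e.2 ≠ j := fun e he => (Finset.mem_erase.1 (hP.1 e he).2.1).1
  have hQx : ∀ e ∈ Q, e.1 ≠ i := fun e he => (Finset.mem_erase.1 (hQ.1 e he).1).1
  have hP' : IsMatching B S g P :=
    matching_mono (le_refl B) (Finset.erase_subset _ _) (fun _ _ h => h) hP
  have hQ' : IsMatching B S g Q :=
    matching_mono (Finset.erase_subset _ _) (le_refl S) (fun _ _ h => h) hQ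
  obtain ⟨M1, M2, hM1, hM2, -, -, -, -, hsum⟩ :=
    lemG g j (fun a b => v a b - c b) B S Q.card Q P i j le_rfl hP' hQ' hi hj (Or.inr rfl)
      hQx hPy
  have h1 := le_Wc (v := v) (c := c) hM1
  have h2 := le_Wc (v := v) (c := c) hM2
  rw [hPval, hQval]
  calc (v i j - c j) + ∑ e ∈ P, (v e.1 e.2 - c e.2) + ∑ e ∈ Q, (v e.1 e.2 - c e.2)
      = ∑ e ∈ M1, (v e.1 e.2 - c e.2) + ∑ e ∈ M2, (v e.1 e.2 - c e.2) := by
        rw [hsum]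
    _ ≤ _ := add_le_add h1 h2

/-- Price of Anarchy with production costs: suppose no seller joining the platform is an
equilibrium at fee `α ∈ [0,1)`; i.e. for every seller `j`, her (cost-market maximum
competitive) off-platform price `p_j^off = (W_c(S) − W_c(S∖{j})) + c_j` satisfies
`p_j^off ≥ (1−α)·p_j^on`. If `β = (Σ_j c_j)/W*` is the ratio of total cost to the
unconstrained optimal welfare `W*`, then the equilibrium welfare is at least
`((1−α−α·β)/(2−α))·W*`. -/
theorem poa_with_costs (B S : Finset ℕ) (g : ℕ → ℕ → Prop) (v : ℕ → ℕ → ℝ) (c : ℕ → ℝ)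
    (hv : ∀ i j, 0 ≤ v i j) (hc : ∀ j, 0 ≤ c j)
    (α : ℝ) (hα0 : 0 ≤ α) (hα1 : α < 1)
    (hWpos : 0 < Wc B S (fun _ _ => True) v c)
    (β : ℝ) (hβ : β = (∑ j ∈ S, c j) / Wc B S (fun _ _ => True) v c)
    (hnojoin : ∀ j ∈ S,
      (1 - α) * ((Wc B S (fun i j' => g i j' ∨ j' = j) v c - Wc B (S.erase j) g v c) + c j)
        ≤ (Wc B S g v c - Wc B (S.erase j) g v c) + c j) :
    ((1 - α - α * β) / (2 - α)) * Wc B S (fun _ _ => True) v c ≤ Wc B S g v c := by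
  set Wstar := Wc B S (fun _ _ => True) v c with hWstarDef
  set Weq := Wc B S g v c with hWeqDef
  obtain ⟨Ms, hMs, hMsval, hMspos⟩ := exists_opt B S (fun _ _ => True) v c
  obtain ⟨Me, hMe, hMeval, hMepos⟩ := exists_opt B S g v c
  -- per-edge inequality
  have hedge : ∀ e ∈ Ms, (1 - α) * (v e.1 e.2 - c e.2) ≤
      (1 - α) * (Weq - Wc (B.erase e.1) S g v c) + (Weq - Wc B (S.erase e.2) g v c)
        + α * c e.2 := by
    intro e he
    obtain ⟨hiB, hjS, -⟩ := hMs.1 e he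
    have hkey := key_exchange B S g v c e.1 e.2 hiB hjS
    have hno := hnojoin e.2 hjS
    have h1α : (0:ℝ) < 1 - α := by linarith
    nlinarith [mul_le_mul_of_nonneg_left
      (sub_le_sub_right hkey (Wc B (S.erase e.2) g v c + Wc B S g v c)) (le_of_lt h1α)]
  -- buyer marginal bound
  have hbuyer : ∀ e ∈ Ms, Weq - Wc (B.erase e.1) S g v c ≤
      ∑ f ∈ Me.filter (fun f => f.1 = e.1), (v f.1 f.2 - c f.2) := by
    intro e he
    have hfil : IsMatching (B.erase e.1) S g (Me.filter (fun f => ¬ f.1 = e.1)) := by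
      constructor
      · intro f hf
        obtain ⟨hfM, hne⟩ := Finset.mem_filter.1 hf
        obtain ⟨h1, h2, h3⟩ := hMe.1 f hfM
        exact ⟨Finset.mem_erase.2 ⟨hne, h1⟩, h2, h3⟩
      · intro f hf f' hf' hne
        exact hMe.2 f (Finset.mem_of_mem_filter f hf) f' (Finset.mem_of_mem_filter f' hf') hne
    have := le_Wc (v := v) (c := c) hfil
    have hsplit := Finset.sum_filter_add_sum_filter_not Me (fun f => f.1 = e.1)
      (fun f => v f.1 f.2 - c f.2)
    rw [hWeqDef, hMeval]
    linarith
  have hseller : ∀ e ∈ Ms, Weq - Wc B (S.erase e.2) g v c ≤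
      ∑ f ∈ Me.filter (fun f => f.2 = e.2), (v f.1 f.2 - c f.2) := by
    intro e he
    have hfil : IsMatching B (S.erase e.2) g (Me.filter (fun f => ¬ f.2 = e.2)) := by
      constructor
      · intro f hf
        obtain ⟨hfM, hne⟩ := Finset.mem_filter.1 hf
        obtain ⟨h1, h2, h3⟩ := hMe.1 f hfM
        exact ⟨h1, Finset.mem_erase.2 ⟨hne, h2⟩, h3⟩
      · intro f hf f' hf' hne
        exact hMe.2 f (Finset.mem_of_mem_filter f hf) f' (Finset.mem_of_mem_filter f' hf') hne
    have := le_Wc (v := v) (c := c) hfil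
    have hsplit := Finset.sum_filter_add_sum_filter_not Me (fun f => f.2 = e.2)
      (fun f => v f.1 f.2 - c f.2)
    rw [hWeqDef, hMeval]
    linarith
  -- aggregated bounds
  have hinj1 : ∀ e ∈ Ms, ∀ e' ∈ Ms, e.1 = e'.1 → e = e' := by
    intro e he e' he' h
    by_contra hne
    exact (hMs.2 e he e' he' hne).1 h
  have hinj2 : ∀ e ∈ Ms, ∀ e' ∈ Ms, e.2 = e'.2 → e = e' := by
    intro e he e' he' h
    by_contra hne
    exact (hMs.2 e he e' he' hne).2 h
  have hsum1 : ∑ e ∈ Ms, (Weq - Wc (B.erase e.1) S g v c) ≤ Weq := by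
    calc ∑ e ∈ Ms, (Weq - Wc (B.erase e.1) S g v c)
        ≤ ∑ e ∈ Ms, ∑ f ∈ Me.filter (fun f => f.1 = e.1), (v f.1 f.2 - c f.2) :=
          Finset.sum_le_sum hbuyer
      _ = ∑ i ∈ Ms.image Prod.fst, ∑ f ∈ Me.filter (fun f => f.1 = i), (v f.1 f.2 - c f.2) := by
          rw [Finset.sum_image]
          intro e he e' he' h
          exact hinj1 e he e' he' h
      _ ≤ ∑ f ∈ Me, (v f.1 f.2 - c f.2) := by
          rw [Finset.sum_fiberwise_eq_sum_filter]
          exact Finset.sum_le_sum_of_subset_of_nonneg (Finset.filter_subset _ _)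
            (fun f hf _ => hMepos f hf)
      _ = Weq := hMeval.symm
  have hsum2 : ∑ e ∈ Ms, (Weq - Wc B (S.erase e.2) g v c) ≤ Weq := by
    calc ∑ e ∈ Ms, (Weq - Wc B (S.erase e.2) g v c)
        ≤ ∑ e ∈ Ms, ∑ f ∈ Me.filter (fun f => f.2 = e.2), (v f.1 f.2 - c f.2) :=
          Finset.sum_le_sum hseller
      _ = ∑ jj ∈ Ms.image Prod.snd, ∑ f ∈ Me.filter (fun f => f.2 = jj), (v f.1 f.2 - c f.2) := by
          rw [Finset.sum_image]
          intro e he e' he' h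
          exact hinj2 e he e' he' h
      _ ≤ ∑ f ∈ Me, (v f.1 f.2 - c f.2) := by
          rw [Finset.sum_fiberwise_eq_sum_filter]
          exact Finset.sum_le_sum_of_subset_of_nonneg (Finset.filter_subset _ _)
            (fun f hf _ => hMepos f hf)
      _ = Weq := hMeval.symm
  have hsum3 : ∑ e ∈ Ms, c e.2 ≤ ∑ j ∈ S, c j := by
    calc ∑ e ∈ Ms, c e.2 = ∑ jj ∈ Ms.image Prod.snd, c jj := by
          rw [Finset.sum_image]
          intro e he e' he' h
          exact hinj2 e he e' he' h
      _ ≤ ∑ j ∈ S, c j := by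
          apply Finset.sum_le_sum_of_subset_of_nonneg
          · intro jj hjj
            obtain ⟨e, he, rfl⟩ := Finset.mem_image.1 hjj
            exact (hMs.1 e he).2.1
          · exact fun j _ _ => hc j
  -- sum the per-edge inequality
  have hagg := Finset.sum_le_sum hedge
  rw [← Finset.mul_sum, Finset.sum_add_distrib, Finset.sum_add_distrib, ← Finset.mul_sum,
    ← Finset.mul_sum] at hagg
  have hWsum : ∑ e ∈ Ms, (v e.1 e.2 - c e.2) = Wstar := hMsval.symm
  rw [hWsum] at hagg
  have hcs : ∑ j ∈ S, c j = β * Wstar := by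
    rw [hβ]
    field_simp
  have hmain : (1 - α) * Wstar ≤ (2 - α) * Weq + α * (β * Wstar) := by
    have h1α : (0:ℝ) ≤ 1 - α := by linarith
    have := mul_le_mul_of_nonneg_left hsum1 h1α
    have h3 := mul_le_mul_of_nonneg_left hsum3 hα0
    rw [hcs] at h3
    nlinarith
  rw [div_mul_eq_mul_div, div_le_iff₀ (by linarith : (0:ℝ) < 2 - α)]
  nlinarith
end
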